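/- arXiv:2602.05357 — 5 statements merged into one kernel-verified Lean document; each statement's English description precedes it below -/
import Mathlib

section
/- Let θ : ℝⁿ → [−∞,+∞] be symmetric, let x ∈ ℝⁿ with θ(x) finite, let y ∈ ℝⁿ, and let Q be an n×n permutation matrix with Qx = x. Then for every w ∈ ℝⁿ, the second subderivatives satisfy d²θ(x, Qy)(w) = d²θ(x, y)(Qᵀw). -/
open Filter Topology Matrix

noncomputable section

namespace SpecPaper

/-! ## Generic variational analysis definitions over a topological real vector space -/

variable {E : Type*}

section Generic

variable [AddCommGroup E] [Module ℝ E] [TopologicalSpace E]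

/-- `f x` is finite (neither `+∞` nor `-∞`). -/
def IsFiniteAt (f : E → EReal) (x : E) : Prop :=
  f x ≠ ⊤ ∧ f x ≠ ⊥

/-- The norm induced by a given inner product. -/
noncomputable def nrm (ip : E → E → ℝ) (x : E) : ℝ :=
  Real.sqrt (ip x x)

/-- The subderivative `df(x)(w)`. -/
noncomputable def subderiv (f : E → EReal) (x w : E) : EReal :=
  Filter.liminf (fun p : ℝ × E => (((p.1)⁻¹ : ℝ) : EReal) * (f (x + p.1 • p.2) - f x))
    ((nhdsWithin (0 : ℝ) (Set.Ioi 0)) ×ˢ nhds w)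

/-- The second-order difference quotient `Δ²ₜ f(x,v)(w)`. -/
noncomputable def sdq2 (ip : E → E → ℝ) (f : E → EReal) (x v : E) (t : ℝ) (w : E) : EReal :=
  (((2 / t ^ 2) : ℝ) : EReal) * (f (x + t • w) - f x - ((t * ip v w : ℝ) : EReal))

/-- The second subderivative `d²f(x,v)(w)`. -/
noncomputable def subderiv2 (ip : E → E → ℝ) (f : E → EReal) (x v w : E) : EReal :=
  Filter.liminf (fun p : ℝ × E => sdq2 ip f x v p.1 p.2)
    ((nhdsWithin (0 : ℝ) (Set.Ioi 0)) ×ˢ nhds w)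

/-- Twice epi-differentiability of `f` at `x` for `v`. -/
def TwiceEpiDiff (ip : E → E → ℝ) (f : E → EReal) (x v : E) : Prop :=
  IsFiniteAt f x ∧
    ∀ t : ℕ → ℝ, (∀ k, 0 < t k) → Tendsto t atTop (nhds 0) →
      ∀ w : E, ∃ ws : ℕ → E, Tendsto ws atTop (nhds w) ∧
        Tendsto (fun k => sdq2 ip f x v (t k) (ws k)) atTop (nhds (subderiv2 ip f x v w))

/-- `v` is a regular subgradient of `f` at `x`. -/
def RegSubgrad (ip : E → E → ℝ) (f : E → EReal) (x v : E) : Prop :=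
  IsFiniteAt f x ∧
    (0 : EReal) ≤ Filter.liminf
      (fun y : E =>
        (((nrm ip (y - x))⁻¹ : ℝ) : EReal) * (f y - f x - ((ip v (y - x) : ℝ) : EReal)))
      (nhdsWithin x {x}ᶜ)

/-- `v` is a (limiting) subgradient of `f` at `x`. -/
def LimSubgrad (ip : E → E → ℝ) (f : E → EReal) (x v : E) : Prop :=
  ∃ xs vs : ℕ → E, (∀ k, RegSubgrad ip f (xs k) (vs k)) ∧
    Tendsto xs atTop (nhds x) ∧ Tendsto vs atTop (nhds v) ∧
    Tendsto (fun k => f (xs k)) atTop (nhds (f x))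

/-- The tangent cone to `C` at `x`. -/
def tangentCone (C : Set E) (x : E) : Set E :=
  {w | ∃ (t : ℕ → ℝ) (ws : ℕ → E), (∀ k, 0 < t k) ∧ Tendsto t atTop (nhds 0) ∧
    Tendsto ws atTop (nhds w) ∧ ∀ k, x + t k • ws k ∈ C}

/-- The regular normal cone to `C` at `x`. -/
def regNormalCone (ip : E → E → ℝ) (C : Set E) (x : E) : Set E :=
  {v | ∀ w ∈ tangentCone C x, ip v w ≤ 0}

/-- The limiting normal cone to `C` at `x`. -/
def limNormalCone (ip : E → E → ℝ) (C : Set E) (x : E) : Set E :=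
  {v | ∃ xs vs : ℕ → E, (∀ k, xs k ∈ C) ∧ (∀ k, vs k ∈ regNormalCone ip C (xs k)) ∧
    Tendsto xs atTop (nhds x) ∧ Tendsto vs atTop (nhds v)}

/-- The critical cone `C_f(x,v)`. -/
def criticalCone (ip : E → E → ℝ) (f : E → EReal) (x v : E) : Set E :=
  {w | subderiv f x w = ((ip v w : ℝ) : EReal)}

/-- `f` is locally Lipschitz continuous at `x` relative to its domain. -/
def LocLipAtRelDom (ip : E → E → ℝ) (f : E → EReal) (x : E) : Prop :=
  IsFiniteAt f x ∧
    ∃ V ∈ nhds x, ∃ ℓ : ℝ, 0 ≤ ℓ ∧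
      ∀ a ∈ V, ∀ b ∈ V, f a ≠ ⊤ → f b ≠ ⊤ →
        f a ≠ ⊥ ∧ f b ≠ ⊥ ∧ |(f a).toReal - (f b).toReal| ≤ ℓ * nrm ip (a - b)

/-- `f` is locally Lipschitz continuous relative to its domain. -/
def LocLipRelDom (ip : E → E → ℝ) (f : E → EReal) : Prop :=
  ∀ x : E, f x ≠ ⊤ → LocLipAtRelDom ip f x

/-- `v` is a proximal subgradient of `f` at `x`. -/
def ProxSubgrad (ip : E → E → ℝ) (f : E → EReal) (x v : E) : Prop :=
  IsFiniteAt f x ∧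
    ∃ r > (0 : ℝ), ∃ ε > (0 : ℝ), ∀ x' : E, nrm ip (x' - x) ≤ ε →
      f x + ((ip v (x' - x) - r / 2 * ip (x' - x) (x' - x) : ℝ) : EReal) ≤ f x'

/-- `f` is prox-regular at `x` for `v`. -/
def ProxRegularAtFor (ip : E → E → ℝ) (f : E → EReal) (x v : E) : Prop :=
  IsFiniteAt f x ∧
    (∃ δ > (0 : ℝ), LowerSemicontinuousOn f {x' | nrm ip (x' - x) < δ}) ∧
    ∃ ε > (0 : ℝ), ∃ r : ℝ, 0 ≤ r ∧
      ∀ x₁ v₁ : E, LimSubgrad ip f x₁ v₁ → nrm ip (x₁ - x) < ε → nrm ip (v₁ - v) < ε →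
        f x₁ < f x + (ε : EReal) →
        ∀ x' : E, nrm ip (x' - x) < ε →
          f x₁ + ((ip v₁ (x' - x₁) - r / 2 * ip (x' - x₁) (x' - x₁) : ℝ) : EReal) ≤ f x'

/-- `f` is prox-regular at `x` (for every subgradient). -/
def ProxRegularAt (ip : E → E → ℝ) (f : E → EReal) (x : E) : Prop :=
  ∀ v : E, LimSubgrad ip f x v → ProxRegularAtFor ip f x v

/-- `f` is subdifferentially continuous at `x`. -/
def SubdiffContAt (ip : E → E → ℝ) (f : E → EReal) (x : E) : Prop :=
  ∀ v : E, LimSubgrad ip f x v →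
    ∀ xs vs : ℕ → E, (∀ k, LimSubgrad ip f (xs k) (vs k)) →
      Tendsto xs atTop (nhds x) → Tendsto vs atTop (nhds v) →
      Tendsto (fun k => f (xs k)) atTop (nhds (f x))

/-- `f` is prox-bounded. -/
def ProxBounded (ip : E → E → ℝ) (f : E → EReal) : Prop :=
  ∃ α c : ℝ, ∀ x : E, (c : EReal) ≤ f x + ((α * ip x x : ℝ) : EReal)

/-- The proximal mapping (as a set of minimizers). -/
def proxSet (ip : E → E → ℝ) (f : E → EReal) (γ : ℝ) (x : E) : Set E :=
  {w | ∀ w' : E,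
    f w + ((1 / (2 * γ) * ip (w - x) (w - x) : ℝ) : EReal) ≤
      f w' + ((1 / (2 * γ) * ip (w' - x) (w' - x) : ℝ) : EReal)}

/-- The proximal map of `f` with parameter `γ` is single-valued around `z` and the resulting
map is directionally differentiable at `z`. -/
def ProxSingleDirDiff (ip : E → E → ℝ) (f : E → EReal) (γ : ℝ) (z : E) : Prop :=
  ∃ V ∈ nhds z, ∃ P : E → E, (∀ u ∈ V, proxSet ip f γ u = {P u}) ∧
    ∀ h : E, ∃ L : E,
      Tendsto (fun t : ℝ => t⁻¹ • (P (z + t • h) - P z)) (nhdsWithin 0 (Set.Ioi 0)) (nhds L)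

/-- The parabolic difference quotient. -/
noncomputable def parabQuot (f : E → EReal) (x w : E) (t : ℝ) (z : E) : EReal :=
  (((2 / t ^ 2) : ℝ) : EReal) *
    (f (x + t • w + (t ^ 2 / 2) • z) - f x - ((t * (subderiv f x w).toReal : ℝ) : EReal))

/-- The parabolic subderivative `d²f(x)(w | z)`. -/
noncomputable def parabSubderiv (f : E → EReal) (x w z : E) : EReal :=
  Filter.liminf (fun p : ℝ × E => parabQuot f x w p.1 p.2)
    ((nhdsWithin (0 : ℝ) (Set.Ioi 0)) ×ˢ nhds z)

/-- `f` is parabolically epi-differentiable at `x` for `w`. -/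
def ParabEpiDiff (f : E → EReal) (x w : E) : Prop :=
  (∃ z : E, parabSubderiv f x w z < ⊤) ∧
    ∀ t : ℕ → ℝ, (∀ k, 0 < t k) → Tendsto t atTop (nhds 0) →
      ∀ z : E, ∃ zs : ℕ → E, Tendsto zs atTop (nhds z) ∧
        Tendsto (fun k => parabQuot f x w (t k) (zs k)) atTop (nhds (parabSubderiv f x w z))

/-- `φ` is a generalized quadratic form: its domain is a linear subspace and on the domain it is
given by a symmetric linear operator. -/
def IsGQF (ip : E → E → ℝ) (φ : E → EReal) : Prop :=
  (φ 0 ≠ ⊤) ∧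
  (∀ x y : E, φ x ≠ ⊤ → φ y ≠ ⊤ → φ (x + y) ≠ ⊤) ∧
  (∀ (c : ℝ) (x : E), φ x ≠ ⊤ → φ (c • x) ≠ ⊤) ∧
  ∃ L : E → E,
    (∀ x y : E, φ x ≠ ⊤ → φ y ≠ ⊤ → L (x + y) = L x + L y) ∧
    (∀ (c : ℝ) (x : E), φ x ≠ ⊤ → L (c • x) = c • L x) ∧
    (∀ x y : E, φ x ≠ ⊤ → φ y ≠ ⊤ → ip (L x) y = ip x (L y)) ∧
    (∀ x : E, φ x ≠ ⊤ → φ x = ((ip (L x) x : ℝ) : EReal))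

/-- `f` is generalized twice differentiable at `x` for `v`. -/
def GenTwiceDiff (ip : E → E → ℝ) (f : E → EReal) (x v : E) : Prop :=
  TwiceEpiDiff ip f x v ∧ IsGQF ip (subderiv2 ip f x v)

/-- Proto-differentiability of a set-valued map `F` at `x` for `y ∈ F x`. -/
def ProtoDiff (F : E → Set E) (x y : E) : Prop :=
  ∀ w η : E, (w, η) ∈ tangentCone {p : E × E | p.2 ∈ F p.1} (x, y) →
    ∀ t : ℕ → ℝ, (∀ k, 0 < t k) → Tendsto t atTop (nhds 0) →
      ∃ ws ηs : ℕ → E, Tendsto ws atTop (nhds w) ∧ Tendsto ηs atTop (nhds η) ∧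
        ∀ k, y + t k • ηs k ∈ F (x + t k • ws k)

/-- Relative interior of a set (interior relative to its affine hull). -/
def relInterior (C : Set E) : Set E :=
  {y | y ∈ C ∧ ∃ V ∈ nhds y, ∀ z ∈ V, z ∈ affineSpan ℝ C → z ∈ C}

/-- A polyhedral set: the intersection of finitely many closed half-spaces. -/
def IsPolyhedral (ip : E → E → ℝ) (C : Set E) : Prop :=
  ∃ (k : ℕ) (a : Fin k → E) (b : Fin k → ℝ), C = {x | ∀ j : Fin k, ip (a j) x ≤ b j}

/-- The subdifferential of a convex function. -/
def convexSubdiff (ip : E → E → ℝ) (f : E → EReal) (x : E) : Set E :=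
  {v | ∀ z : E, f x + ((ip v (z - x) : ℝ) : EReal) ≤ f z}

/-- The natural inner product on `E × ℝ`. -/
def ipProd (ip : E → E → ℝ) : E × ℝ → E × ℝ → ℝ :=
  fun p q => ip p.1 q.1 + p.2 * q.2

/-- The epigraph of `f`. -/
def epiSet (f : E → EReal) : Set (E × ℝ) :=
  {p | f p.1 ≤ (p.2 : EReal)}

/-- `f` is subdifferentially regular at `x`. -/
def SubdiffRegularAt (ip : E → E → ℝ) (f : E → EReal) (x : E) : Prop :=
  IsFiniteAt f x ∧
    regNormalCone (ipProd ip) (epiSet f) (x, (f x).toReal) =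
      limNormalCone (ipProd ip) (epiSet f) (x, (f x).toReal)

/-! Real-valued versions: semidifferentiability, gradients. -/

/-- `f` is semidifferentiable at `x`. -/
def SemiDiffAt (f : E → ℝ) (x : E) : Prop :=
  ∀ w : E, ∃ d : ℝ,
    Tendsto (fun p : ℝ × E => (p.1)⁻¹ * (f (x + p.1 • p.2) - f x))
      ((nhdsWithin (0 : ℝ) (Set.Ioi 0)) ×ˢ nhds w) (nhds d)

/-- The (real value of the) subderivative of a real-valued function. -/
noncomputable def dReal (f : E → ℝ) (x w : E) : ℝ :=
  (subderiv (fun y => ((f y : ℝ) : EReal)) x w).toReal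

/-- The second-order difference quotient built from the subderivative. -/
noncomputable def sdq2R (f : E → ℝ) (x : E) (t : ℝ) (w : E) : ℝ :=
  (2 / t ^ 2) * (f (x + t • w) - f x - t * dReal f x w)

/-- `f` is twice semidifferentiable at `x`. -/
def TwiceSemiDiffAt (f : E → ℝ) (x : E) : Prop :=
  SemiDiffAt f x ∧
    ∀ w : E, ∃ d : ℝ,
      Tendsto (fun p : ℝ × E => sdq2R f x p.1 p.2)
        ((nhdsWithin (0 : ℝ) (Set.Ioi 0)) ×ˢ nhds w) (nhds d)

/-- The second semiderivative `d²f(x)(w)` (the liminf; it is the full limit whenever `f` is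
twice semidifferentiable at `x`). -/
noncomputable def secondSemiDeriv (f : E → ℝ) (x w : E) : EReal :=
  Filter.liminf (fun p : ℝ × E => ((sdq2R f x p.1 p.2 : ℝ) : EReal))
    ((nhdsWithin (0 : ℝ) (Set.Ioi 0)) ×ˢ nhds w)

/-- `f` is (Fréchet) differentiable at `x` with gradient `g` (w.r.t. inner product `ip`). -/
def HasGradAt (ip : E → E → ℝ) (f : E → ℝ) (x g : E) : Prop :=
  Tendsto (fun y : E => (nrm ip (y - x))⁻¹ * (f y - f x - ip g (y - x)))
    (nhdsWithin x {x}ᶜ) (nhds 0)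

/-- `f` is locally Lipschitz continuous around `x`. -/
def LocLipAt (ip : E → E → ℝ) (f : E → ℝ) (x : E) : Prop :=
  ∃ V ∈ nhds x, ∃ ℓ : ℝ, 0 ≤ ℓ ∧ ∀ a ∈ V, ∀ b ∈ V, |f a - f b| ≤ ℓ * nrm ip (a - b)

/-- `f` is twice differentiable at `x` with gradient map `G` near `x` and second derivative
(the derivative of `G` at `x`) given by the linear map `Dxx`. -/
def HasSecondDerivAt (ip : E → E → ℝ) (f : E → EReal) (x : E) (G : E → E) (Dxx : E → E) :
    Prop :=
  ∃ V ∈ nhds x, ∃ fr : E → ℝ,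
    (∀ z ∈ V, f z = ((fr z : ℝ) : EReal)) ∧
    (∀ z ∈ V, HasGradAt ip fr z (G z)) ∧
    IsLinearMap ℝ Dxx ∧
    Tendsto (fun z : E => (nrm ip (z - x))⁻¹ • (G z - G x - Dxx (z - x)))
      (nhdsWithin x {x}ᶜ) (nhds 0)

/-- `f` is twice differentiable at `x`. -/
def TwiceDiffAt (ip : E → E → ℝ) (f : E → EReal) (x : E) : Prop :=
  ∃ G Dxx : E → E, HasSecondDerivAt ip f x G Dxx

end Generic

/-! ## Eigenvalues and spectral machinery -/

open scoped Classical in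
/-- The eigenvalues of a real symmetric matrix, arranged in nonincreasing order
(junk value `0` if the matrix is not symmetric). -/
noncomputable def eigval {n : ℕ} (X : Matrix (Fin n) (Fin n) ℝ) : Fin n → ℝ :=
  if h : X.IsHermitian then
    fun i => h.eigenvalues (Tuple.sort (fun j => -h.eigenvalues j) i)
  else 0

/-- `Oⁿ(X)`: orthogonal matrices realizing the ordered spectral decomposition of `X`. -/
def eigOrth {n : ℕ} (X : Matrix (Fin n) (Fin n) ℝ) : Set (Matrix (Fin n) (Fin n) ℝ) :=
  {U | U * Uᵀ = 1 ∧ X = U * Matrix.diagonal (eigval X) * Uᵀ}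

open scoped Classical in
/-- The block `α_m` of indices `j` whose eigenvalue `λ_j(X)` equals `λ_i(X)`. -/
noncomputable def blockSet {n : ℕ} (X : Matrix (Fin n) (Fin n) ℝ) (i : Fin n) :
    Finset (Fin n) :=
  Finset.univ.filter fun j => eigval X j = eigval X i

lemma mem_blockSet_self {n : ℕ} (X : Matrix (Fin n) (Fin n) ℝ) (i : Fin n) :
    i ∈ blockSet X i := by
  simp [blockSet]

/-- The increasing enumeration of the block of `i`. -/
noncomputable def blockEmb {n : ℕ} (X : Matrix (Fin n) (Fin n) ℝ) (i : Fin n) :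
    Fin (blockSet X i).card → Fin n :=
  fun a => ((blockSet X i).orderIsoOfFin rfl a : Fin n)

/-- The position of `i` inside its own block. -/
noncomputable def blockIdx {n : ℕ} (X : Matrix (Fin n) (Fin n) ℝ) (i : Fin n) :
    Fin (blockSet X i).card :=
  ((blockSet X i).orderIsoOfFin rfl).symm ⟨i, mem_blockSet_self X i⟩

/-- The principal submatrix of `M` corresponding to the block of `i` (for `X`). -/
noncomputable def blockMat {n : ℕ} (X M : Matrix (Fin n) (Fin n) ℝ) (i : Fin n) :
    Matrix (Fin (blockSet X i).card) (Fin (blockSet X i).card) ℝ :=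
  Matrix.of fun a b => M (blockEmb X i a) (blockEmb X i b)

/-- The directional derivative `λ'(X;H)` of the ordered eigenvalue map, computed through
`U ∈ Oⁿ(X)`: blockwise ordered eigenvalues of `U_{α_m}ᵀ H U_{α_m}`. -/
noncomputable def lambdaDir {n : ℕ} (X U H : Matrix (Fin n) (Fin n) ℝ) : Fin n → ℝ :=
  fun i => eigval (blockMat X (Uᵀ * H * U) i) (blockIdx X i)

open scoped Classical in
/-- The Moore–Penrose pseudoinverse of a square real matrix, characterized by the four
Penrose equations. -/
noncomputable def pinv {n : ℕ} (A : Matrix (Fin n) (Fin n) ℝ) :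
    Matrix (Fin n) (Fin n) ℝ :=
  if h : ∃ B : Matrix (Fin n) (Fin n) ℝ,
      A * B * A = A ∧ B * A * B = B ∧ (A * B)ᵀ = A * B ∧ (B * A)ᵀ = B * A
  then h.choose else 0

/-- The curvature term `2 ∑ₘ ⟨Diag(y)_{αₘαₘ}, U_{αₘ}ᵀ H (μₘ I - X)† H U_{αₘ}⟩`, written as a
single sum over all indices. -/
noncomputable def curvTerm {n : ℕ} (X U H : Matrix (Fin n) (Fin n) ℝ) (y : Fin n → ℝ) : ℝ :=
  2 * ∑ i : Fin n, y i *
    (Uᵀ * (H * pinv (eigval X i • (1 : Matrix (Fin n) (Fin n) ℝ) - X) * H) * U) i i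

/-- Two symmetric matrices admit a simultaneous ordered spectral decomposition. -/
def simOrdSpec {k : ℕ} (A B : Matrix (Fin k) (Fin k) ℝ) : Prop :=
  ∃ P : Matrix (Fin k) (Fin k) ℝ, P * Pᵀ = 1 ∧
    A = P * Matrix.diagonal (eigval A) * Pᵀ ∧
    B = P * Matrix.diagonal (eigval B) * Pᵀ

/-- The subspace of symmetric `n × n` real matrices. -/
def symSubmodule (n : ℕ) : Submodule ℝ (Matrix (Fin n) (Fin n) ℝ) where
  carrier := {A | A.IsSymm}
  add_mem' := by
    intro a b ha hb
    simp only [Set.mem_setOf_eq, Matrix.IsSymm] at *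
    rw [Matrix.transpose_add, ha, hb]
  zero_mem' := by
    simp only [Set.mem_setOf_eq, Matrix.IsSymm, Matrix.transpose_zero]
  smul_mem' := by
    intro c a ha
    simp only [Set.mem_setOf_eq, Matrix.IsSymm] at *
    rw [Matrix.transpose_smul, ha]

/-- The space `Sⁿ` of symmetric `n × n` real matrices. -/
abbrev Sym (n : ℕ) : Type := ↥(symSubmodule n)

/-- The trace inner product `⟨A, B⟩ = tr(AB)` on `Sⁿ`. -/
noncomputable def ipM {n : ℕ} (A B : Sym n) : ℝ :=
  ((A : Matrix (Fin n) (Fin n) ℝ) * (B : Matrix (Fin n) (Fin n) ℝ)).trace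

/-- The Euclidean inner product on `ℝⁿ`. -/
def ipV {n : ℕ} (v w : Fin n → ℝ) : ℝ :=
  ∑ i, v i * w i

/-- The spectral function `g = θ ∘ λ` on `Sⁿ`. -/
noncomputable def specFn {n : ℕ} (θ : (Fin n → ℝ) → EReal) : Sym n → EReal :=
  fun A => θ (eigval (A : Matrix (Fin n) (Fin n) ℝ))

/-- A function on `ℝⁿ` is symmetric (permutation invariant). -/
def SymmetricFn {n : ℕ} {α : Type*} (θ : (Fin n → ℝ) → α) : Prop :=
  ∀ (x : Fin n → ℝ) (σ : Equiv.Perm (Fin n)), θ (fun i => x (σ i)) = θ x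

/-- The diagonal matrix `Diag(w)` as an element of `Sⁿ`. -/
noncomputable def diagSym {n : ℕ} (w : Fin n → ℝ) : Sym n :=
  ⟨Matrix.diagonal w, Matrix.isSymm_diagonal w⟩

/-- The `i`-th order statistic: `orderStat x i` is the `i`-th largest entry of `x`. -/
noncomputable def orderStat {n : ℕ} (x : Fin n → ℝ) : Fin n → ℝ :=
  fun i => x (Tuple.sort (fun j => -x j) i)


section Invariance

variable [AddCommGroup E] [Module ℝ E] [TopologicalSpace E]
  {ip : E → E → ℝ} {f : E → EReal} {x : E}

theorem sdq2_map_equiv (L : E ≃L[ℝ] E) (hf : ∀ z, f (L z) = f z) (hx : L x = x)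
    (hip : ∀ v w, ip (L v) (L w) = ip v w) (v : E) (t : ℝ) (w : E) :
    sdq2 ip f x (L v) t (L w) = sdq2 ip f x v t w := by
  have hshift : x + t • L w = L (x + t • w) := by rw [map_add, map_smul, hx]
  simp only [sdq2, hshift, hf, hip]

theorem subderiv2_map_equiv (L : E ≃L[ℝ] E) (hf : ∀ z, f (L z) = f z) (hx : L x = x)
    (hip : ∀ v w, ip (L v) (L w) = ip v w) (v w : E) :
    subderiv2 ip f x (L v) (L w) = subderiv2 ip f x v w := by
  have hfilter : map (Prod.map id L) (𝓝[>] (0 : ℝ) ×ˢ 𝓝 w) = 𝓝[>] 0 ×ˢ 𝓝 (L w) := by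
    rw [← prod_map_map_eq', Filter.map_id, L.map_nhds_eq]
  rw [subderiv2, ← hfilter, ← liminf_comp, subderiv2]
  congr with p
  exact sdq2_map_equiv L hf hx hip v p.1 p.2

end Invariance

theorem ipV_comp_perm {n : ℕ} (σ : Equiv.Perm (Fin n)) (v w : Fin n → ℝ) :
    ipV (fun i => v (σ i)) (fun i => w (σ i)) = ipV v w :=
  Equiv.sum_comp σ fun i => v i * w i

theorem second_subderiv_perm_general {n : ℕ} (θ : (Fin n → ℝ) → EReal) (x y : Fin n → ℝ)
    (σ : Equiv.Perm (Fin n))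
    (hsym : SymmetricFn θ)
    (hfix : ∀ i, x (σ i) = x i) :
    ∀ w : Fin n → ℝ,
      subderiv2 ipV θ x (fun i => y (σ i)) w =
        subderiv2 ipV θ x y (fun i => w (σ.symm i)) := by
  intro w
  let L := (LinearEquiv.funCongrLeft ℝ ℝ σ.symm).toContinuousLinearEquiv
  have hL : ∀ u, L u = fun i => u (σ.symm i) := fun _ => rfl
  have hx : L x = x := by
    ext i
    rw [hL]
    simpa only [σ.apply_symm_apply] using (hfix (σ.symm i)).symm
  have key := subderiv2_map_equiv L (fun z => hsym z σ.symm) hx (ipV_comp_perm σ.symm)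
    (fun i => y (σ i)) w
  simpa only [hL, σ.apply_symm_apply] using key.symm

/-- the second subderivative of a symmetric function under a permutation
fixing the base point: `d²θ(x, Qy)(w) = d²θ(x, y)(Qᵀ w)`. -/
theorem second_subderiv_perm {n : ℕ} (θ : (Fin n → ℝ) → EReal) (x y : Fin n → ℝ)
    (σ : Equiv.Perm (Fin n))
    (hsym : SymmetricFn θ) (hfin : IsFiniteAt θ x)
    (hfix : ∀ i, x (σ i) = x i) :
    ∀ w : Fin n → ℝ,
      subderiv2 ipV θ x (fun i => y (σ i)) w =
        subderiv2 ipV θ x y (fun i => w (σ.symm i)) :=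
  second_subderiv_perm_general θ x y σ hsym hfix

end SpecPaper
end
end

section
/- Let θ : ℝⁿ → [−∞,+∞] be symmetric and the spectral function g = θ∘λ lower semicontinuous. Let (X,Y) ∈ gph ∂g with Y = U·Diag(y)·Uᵀ for some y ∈ ∂θ(λ(X)) and U ∈ Oⁿ(X), and let v = Qy for a block-diagonal permutation matrix Q (blocks indexed by α₁,…,α_r) chosen so that each block v_{α_m} has nonincreasing entries. Then θ is twice epi-differentiable at λ(X) for y if and only if θ is twice epi-differentiable at λ(X) for v. -/
open Filter Topology Matrix

noncomputable section

namespace SpecPaper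

/-! ## Generic variational analysis definitions over a topological real vector space -/

variable {E : Type*}

section Invariance

variable {E : Type*} [AddCommGroup E] [Module ℝ E] [TopologicalSpace E]
  {ip : E → E → ℝ} {f : E → EReal} {x : E} {A : E ≃L[ℝ] E}

lemma sdq2_map (hf : ∀ z, f (A z) = f z) (hx : A x = x) (hip : ∀ a b, ip (A a) (A b) = ip a b)
    (v : E) (t : ℝ) (w : E) : sdq2 ip f x (A v) t (A w) = sdq2 ip f x v t w := by
  have hshift : x + t • A w = A (x + t • w) := by rw [map_add, map_smul, hx]
  simp only [sdq2, hshift, hf, hip]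

lemma subderiv2_map (hf : ∀ z, f (A z) = f z) (hx : A x = x)
    (hip : ∀ a b, ip (A a) (A b) = ip a b) (v w : E) :
    subderiv2 ip f x (A v) (A w) = subderiv2 ip f x v w := by
  have hfilter : nhdsWithin (0 : ℝ) (Set.Ioi 0) ×ˢ 𝓝 (A w) =
      Filter.map (Prod.map id A) (nhdsWithin (0 : ℝ) (Set.Ioi 0) ×ˢ 𝓝 w) := by
    rw [← A.map_nhds_eq, Filter.prod_map_right]
  rw [subderiv2, hfilter, ← Filter.liminf_comp]
  exact congrArg₂ _ (funext fun p => sdq2_map hf hx hip v p.1 p.2) rfl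

lemma TwiceEpiDiff.map (hf : ∀ z, f (A z) = f z) (hx : A x = x)
    (hip : ∀ a b, ip (A a) (A b) = ip a b) {v : E} (h : TwiceEpiDiff ip f x v) :
    TwiceEpiDiff ip f x (A v) := by
  refine ⟨h.1, fun t ht htlim w => ?_⟩
  obtain ⟨ws, hws, hquot⟩ := h.2 t ht htlim (A.symm w)
  refine ⟨fun k => A (ws k), by
    simpa only [Function.comp_def, A.apply_symm_apply] using (A.continuous.tendsto _).comp hws, ?_⟩
  simpa only [sdq2_map hf hx hip, ← subderiv2_map hf hx hip v, A.apply_symm_apply] using hquot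

lemma twiceEpiDiff_map_iff (hf : ∀ z, f (A z) = f z) (hx : A x = x)
    (hip : ∀ a b, ip (A a) (A b) = ip a b) (v : E) :
    TwiceEpiDiff ip f x (A v) ↔ TwiceEpiDiff ip f x v := by
  refine ⟨fun h => ?_, TwiceEpiDiff.map hf hx hip⟩
  have hf' : ∀ z, f (A.symm z) = f z := fun z => by rw [← hf, A.apply_symm_apply]
  have hx' : A.symm x = x := by rw [A.symm_apply_eq, hx]
  have hip' : ∀ a b, ip (A.symm a) (A.symm b) = ip a b := fun a b => by
    rw [← hip, A.apply_symm_apply, A.apply_symm_apply]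
  simpa using h.map hf' hx' hip'

end Invariance

/-- The coordinate permutation `u ↦ u ∘ σ` of `ℝⁿ`. -/
def permCLE {n : ℕ} (σ : Equiv.Perm (Fin n)) : (Fin n → ℝ) ≃L[ℝ] (Fin n → ℝ) :=
  (LinearEquiv.funCongrLeft ℝ ℝ σ).toContinuousLinearEquiv

lemma ipV_permCLE {n : ℕ} (σ : Equiv.Perm (Fin n)) (a b : Fin n → ℝ) :
    ipV (permCLE σ a) (permCLE σ b) = ipV a b :=
  Equiv.sum_comp σ fun j => a j * b j

lemma twiceEpiDiff_perm_iff {n : ℕ} {θ : (Fin n → ℝ) → EReal} (hθ : SymmetricFn θ)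
    {x : Fin n → ℝ} {σ : Equiv.Perm (Fin n)} (hx : ∀ i, x (σ i) = x i) (y : Fin n → ℝ) :
    TwiceEpiDiff ipV θ x (fun i => y (σ i)) ↔ TwiceEpiDiff ipV θ x y :=
  twiceEpiDiff_map_iff (fun z => hθ z σ) (funext hx) (ipV_permCLE σ) y

theorem twice_epi_diff_perm_general {n : ℕ} (θ : (Fin n → ℝ) → EReal)
    (X : Sym n) (y v : Fin n → ℝ) (σ : Equiv.Perm (Fin n))
    (hsym : SymmetricFn θ)
    (hσblock : ∀ i, eigval X.val (σ i) = eigval X.val i)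
    (hv : ∀ i, v i = y (σ i)) :
    TwiceEpiDiff ipV θ (eigval X.val) y ↔ TwiceEpiDiff ipV θ (eigval X.val) v := by
  rw [show v = fun i => y (σ i) from funext hv]
  exact (twiceEpiDiff_perm_iff hsym hσblock y).symm

/-- Lemma 3.4(a): twice epi-differentiability of `θ` at `λ(X)` for `y` is
equivalent to the same property for the blockwise-reordered vector `v = Qy`. -/
theorem twice_epi_diff_perm {n : ℕ} (θ : (Fin n → ℝ) → EReal)
    (X Y : Sym n) (U : Matrix (Fin n) (Fin n) ℝ) (y v : Fin n → ℝ) (σ : Equiv.Perm (Fin n))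
    (hsym : SymmetricFn θ) (hlsc : LowerSemicontinuous (specFn θ))
    (hY : LimSubgrad ipM (specFn θ) X Y)
    (hU : U ∈ eigOrth X.val)
    (hy : LimSubgrad ipV θ (eigval X.val) y)
    (hYdec : Y.val = U * Matrix.diagonal y * Uᵀ)
    (hσblock : ∀ i, eigval X.val (σ i) = eigval X.val i)
    (hv : ∀ i, v i = y (σ i))
    (hvdec : ∀ i j : Fin n, i ≤ j → eigval X.val i = eigval X.val j → v j ≤ v i) :
    TwiceEpiDiff ipV θ (eigval X.val) y ↔ TwiceEpiDiff ipV θ (eigval X.val) v :=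
  twice_epi_diff_perm_general θ X y v σ hsym hσblock hv

end SpecPaper
end
end

section
/- Let θ : ℝⁿ → [−∞,+∞] be symmetric and the spectral function g = θ∘λ lower semicontinuous. Let (X,Y) ∈ gph ∂g with Y = U·Diag(y)·Uᵀ for some y ∈ ∂θ(λ(X)) and U ∈ Oⁿ(X). If g is twice epi-differentiable at X for Y, then g is twice epi-differentiable at Diag(λ(X)) for Diag(y). -/
open Filter Topology Matrix

noncomputable section

namespace SpecPaper

/-! ## Generic variational analysis definitions over a topological real vector space -/

variable {E : Type*}

/-! ### Auxiliary lemmas for Statement 5 -/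

open Polynomial in
theorem charpoly_conj' {n : ℕ} (A V W : Matrix (Fin n) (Fin n) ℝ) (h1 : V * W = 1) :
    (V * A * W).charpoly = A.charpoly := by
  have key : charmatrix (V * A * W) =
      V.map (C : ℝ →+* ℝ[X]) * charmatrix A * W.map (C : ℝ →+* ℝ[X]) := by
    unfold charmatrix
    simp only [RingHom.mapMatrix_apply]
    rw [mul_sub, sub_mul, ← Matrix.map_mul, ← Matrix.map_mul]
    congr 1
    rw [← scalar_commute _ (fun r => (Commute.all _ _)), mul_assoc, ← Matrix.map_mul, h1]
    simp
  rw [Matrix.charpoly, key, det_mul, det_mul, Matrix.charpoly, mul_comm (V.map _).det,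
    mul_assoc, ← det_mul, ← Matrix.map_mul, h1]
  simp

open Polynomial in
theorem charpoly_diag' {n : ℕ} (d : Fin n → ℝ) :
    (Matrix.diagonal d).charpoly = ∏ i, (X - C (d i)) := by
  have : charmatrix (Matrix.diagonal d) = Matrix.diagonal fun i => X - C (d i) := by
    ext i j
    by_cases h : i = j
    · subst h; simp
    · simp [charmatrix_apply_ne _ _ _ h, Matrix.diagonal_apply_ne _ h,
        Matrix.diagonal_apply_ne d h]
  rw [Matrix.charpoly, this, det_diagonal]

open Polynomial in
theorem roots_charpoly_herm {n : ℕ} (A : Matrix (Fin n) (Fin n) ℝ) (hA : A.IsHermitian) :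
    A.charpoly.roots = ↑(List.ofFn hA.eigenvalues) := by
  have hW := (Matrix.mem_unitaryGroup_iff).mp (hA.eigenvectorUnitary).2
  have hdiag : Matrix.diagonal ((RCLike.ofReal : ℝ → ℝ) ∘ hA.eigenvalues)
      = Matrix.diagonal hA.eigenvalues := by congr 1
  have hchar : A.charpoly = (Matrix.diagonal hA.eigenvalues).charpoly := by
    conv_lhs => rw [hA.spectral_theorem, hdiag]
    exact charpoly_conj' _ _ _ hW
  have h1 : (Multiset.map (fun i => X - C (hA.eigenvalues i)) Finset.univ.val)
      = (Multiset.map hA.eigenvalues Finset.univ.val).map (fun a => X - C a) := by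
    rw [Multiset.map_map]; rfl
  rw [hchar, charpoly_diag', Finset.prod_eq_multiset_prod, h1,
    roots_multiset_prod_X_sub_C, List.ofFn_eq_map]
  rfl

theorem eigval_perm_charpoly {n : ℕ} (A : Matrix (Fin n) (Fin n) ℝ) (hA : A.IsHermitian) :
    A.charpoly.roots = ↑(List.ofFn (eigval A)) ∧ Monotone (fun i => -(eigval A i)) := by
  have he : eigval A = fun i => hA.eigenvalues (Tuple.sort (fun j => -hA.eigenvalues j) i) := by
    rw [eigval, dif_pos hA]
  constructor
  · rw [roots_charpoly_herm A hA, he]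
    apply Multiset.coe_eq_coe.mpr
    exact ((Tuple.sort fun j => -hA.eigenvalues j).ofFn_comp_perm hA.eigenvalues).symm
  · have := Tuple.monotone_sort (fun j => -hA.eigenvalues j)
    rw [he]
    exact this

theorem eigval_conj {n : ℕ} (A U : Matrix (Fin n) (Fin n) ℝ) (hA : A.IsHermitian)
    (hU : U * Uᵀ = 1) : eigval (Uᵀ * A * U) = eigval A := by
  have hU' : Uᵀ * U = 1 := mul_eq_one_comm.mp hU
  have hB : (Uᵀ * A * U).IsHermitian := by
    have := Matrix.isHermitian_conjTranspose_mul_mul U hA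
    rwa [Matrix.conjTranspose_eq_transpose_of_trivial] at this
  obtain ⟨hrB, hmB⟩ := eigval_perm_charpoly _ hB
  obtain ⟨hrA, hmA⟩ := eigval_perm_charpoly _ hA
  have hch : (Uᵀ * A * U).charpoly = A.charpoly := charpoly_conj' A Uᵀ U hU'
  have hperm : List.Perm (List.ofFn (eigval (Uᵀ * A * U))) (List.ofFn (eigval A)) := by
    rw [← Multiset.coe_eq_coe, ← hrA, ← hrB, hch]
  have hlist : List.ofFn (fun i => -(eigval (Uᵀ * A * U) i))
      = List.ofFn (fun i => -(eigval A i)) := by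
    apply List.Perm.eq_of_sortedLE hmB.sortedLE_ofFn hmA.sortedLE_ofFn
    have := hperm.map (fun x : ℝ => -x)
    rwa [List.map_ofFn, List.map_ofFn] at this
  have h2 := List.ofFn_injective hlist
  funext i
  have := congrFun h2 i
  simpa using this

theorem sym_isHermitian {n : ℕ} (A : Sym n) : (A : Matrix (Fin n) (Fin n) ℝ).IsHermitian := by
  have h : (A : Matrix (Fin n) (Fin n) ℝ).IsSymm := A.2
  rwa [Matrix.IsHermitian, Matrix.conjTranspose_eq_transpose_of_trivial]

/-- Conjugation `A ↦ Uᵀ A U` on symmetric matrices. -/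
noncomputable def conjSym {n : ℕ} (U : Matrix (Fin n) (Fin n) ℝ) (A : Sym n) : Sym n :=
  ⟨Uᵀ * (A : Matrix (Fin n) (Fin n) ℝ) * U, by
    have h : (A : Matrix (Fin n) (Fin n) ℝ)ᵀ = A := A.2
    show (Uᵀ * (A : Matrix (Fin n) (Fin n) ℝ) * U).IsSymm
    rw [Matrix.IsSymm, Matrix.transpose_mul, Matrix.transpose_mul, Matrix.transpose_transpose,
      h, Matrix.mul_assoc]⟩

theorem conjSym_val {n : ℕ} (U : Matrix (Fin n) (Fin n) ℝ) (A : Sym n) :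
    (conjSym U A : Matrix (Fin n) (Fin n) ℝ) = Uᵀ * A * U := rfl

theorem conjSym_add {n : ℕ} (U : Matrix (Fin n) (Fin n) ℝ) (A B : Sym n) :
    conjSym U (A + B) = conjSym U A + conjSym U B := by
  apply Subtype.ext
  show Uᵀ * ((A : Matrix (Fin n) (Fin n) ℝ) + B) * U = Uᵀ * A * U + Uᵀ * B * U
  rw [Matrix.mul_add, Matrix.add_mul]

theorem conjSym_smul {n : ℕ} (U : Matrix (Fin n) (Fin n) ℝ) (c : ℝ) (A : Sym n) :
    conjSym U (c • A) = c • conjSym U A := by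
  apply Subtype.ext
  show Uᵀ * (c • (A : Matrix (Fin n) (Fin n) ℝ)) * U = c • (Uᵀ * A * U)
  rw [Matrix.mul_smul, Matrix.smul_mul]

theorem conjSym_conjSym {n : ℕ} (U : Matrix (Fin n) (Fin n) ℝ) (hU : Uᵀ * U = 1) (A : Sym n) :
    conjSym Uᵀ (conjSym U A) = A := by
  apply Subtype.ext
  show Uᵀᵀ * (Uᵀ * (A : Matrix (Fin n) (Fin n) ℝ) * U) * Uᵀ = A
  rw [Matrix.transpose_transpose]
  calc U * (Uᵀ * (A : Matrix (Fin n) (Fin n) ℝ) * U) * Uᵀ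
      = (U * Uᵀ) * ((A : Matrix (Fin n) (Fin n) ℝ) * (U * Uᵀ)) := by
        simp only [Matrix.mul_assoc]
    _ = A := by rw [mul_eq_one_comm.mp hU]; simp

theorem continuous_conjSym {n : ℕ} (U : Matrix (Fin n) (Fin n) ℝ) :
    Continuous (conjSym U : Sym n → Sym n) := by
  apply Continuous.subtype_mk
  exact (continuous_const.matrix_mul continuous_subtype_val).matrix_mul continuous_const

/-- Conjugation as a homeomorphism of `Sym n`. -/
noncomputable def conjHomeo {n : ℕ} (U : Matrix (Fin n) (Fin n) ℝ) (hU : U * Uᵀ = 1) :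
    Sym n ≃ₜ Sym n where
  toFun := conjSym U
  invFun := conjSym Uᵀ
  left_inv A := conjSym_conjSym U (mul_eq_one_comm.mp hU) A
  right_inv A := by
    have := conjSym_conjSym Uᵀ (by rw [Matrix.transpose_transpose]; exact hU) A
    rwa [Matrix.transpose_transpose] at this
  continuous_toFun := continuous_conjSym U
  continuous_invFun := continuous_conjSym Uᵀ

theorem specFn_conjSym {n : ℕ} (θ : (Fin n → ℝ) → EReal) (U : Matrix (Fin n) (Fin n) ℝ)
    (hU : U * Uᵀ = 1) (A : Sym n) : specFn θ (conjSym U A) = specFn θ A := by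
  show θ (eigval (Uᵀ * (A : Matrix (Fin n) (Fin n) ℝ) * U)) = θ (eigval A)
  rw [eigval_conj _ U (sym_isHermitian A) hU]

theorem ipM_conjSym {n : ℕ} (U : Matrix (Fin n) (Fin n) ℝ) (hU : U * Uᵀ = 1) (A B : Sym n) :
    ipM (conjSym U A) (conjSym U B) = ipM A B := by
  show ((Uᵀ * (A : Matrix (Fin n) (Fin n) ℝ) * U) * (Uᵀ * B * U)).trace
    = ((A : Matrix (Fin n) (Fin n) ℝ) * B).trace
  have h1 : (Uᵀ * (A : Matrix (Fin n) (Fin n) ℝ) * U) * (Uᵀ * (B : Matrix (Fin n) (Fin n) ℝ) * U)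
      = Uᵀ * (((A : Matrix (Fin n) (Fin n) ℝ) * B) * U) := by
    calc (Uᵀ * (A : Matrix (Fin n) (Fin n) ℝ) * U) * (Uᵀ * B * U)
        = Uᵀ * ((A : Matrix (Fin n) (Fin n) ℝ) * ((U * Uᵀ) * (B * U))) := by
          simp only [Matrix.mul_assoc]
      _ = Uᵀ * (((A : Matrix (Fin n) (Fin n) ℝ) * B) * U) := by
          rw [hU, Matrix.one_mul, Matrix.mul_assoc]
  rw [h1, Matrix.trace_mul_comm, Matrix.mul_assoc, hU, Matrix.mul_one]

theorem sdq2_conjSym {n : ℕ} (θ : (Fin n → ℝ) → EReal) (U : Matrix (Fin n) (Fin n) ℝ)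
    (hU : U * Uᵀ = 1) (x v : Sym n) (t : ℝ) (w : Sym n) :
    sdq2 ipM (specFn θ) (conjSym U x) (conjSym U v) t (conjSym U w)
      = sdq2 ipM (specFn θ) x v t w := by
  unfold sdq2
  rw [← conjSym_smul, ← conjSym_add, specFn_conjSym θ U hU, specFn_conjSym θ U hU,
    ipM_conjSym U hU]

theorem liminf_map' {α β : Type*} (f : β → EReal) (m : α → β) (F : Filter α) :
    Filter.liminf f (Filter.map m F) = Filter.liminf (f ∘ m) F := by
  simp [Filter.liminf_eq, Filter.eventually_map]

theorem subderiv2_conjSym {n : ℕ} (θ : (Fin n → ℝ) → EReal) (U : Matrix (Fin n) (Fin n) ℝ)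
    (hU : U * Uᵀ = 1) (x v w : Sym n) :
    subderiv2 ipM (specFn θ) (conjSym U x) (conjSym U v) w
      = subderiv2 ipM (specFn θ) x v (conjSym Uᵀ w) := by
  set Φ := conjHomeo U hU with hΦ
  have hnw : (nhds w : Filter (Sym n)) = Filter.map (conjSym U) (nhds (conjSym Uᵀ w)) := by
    have h1 : Filter.map (conjSym U) (nhds (conjSym Uᵀ w))
        = Filter.map (⇑Φ) (nhds (conjSym Uᵀ w)) := rfl
    rw [h1, Φ.map_nhds_eq]
    congr 1
    exact (Φ.apply_symm_apply w).symm
  unfold subderiv2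
  rw [hnw]
  have hprod : (nhdsWithin (0 : ℝ) (Set.Ioi 0)) ×ˢ Filter.map (conjSym U) (nhds (conjSym Uᵀ w))
      = Filter.map (Prod.map id (conjSym U))
          ((nhdsWithin (0 : ℝ) (Set.Ioi 0)) ×ˢ nhds (conjSym Uᵀ w)) := by
    rw [← Filter.prod_map_map_eq', Filter.map_id]
  rw [hprod, liminf_map']
  congr 1
  funext p
  exact sdq2_conjSym θ U hU x v p.1 p.2

/-- Lemma 3.4(b): if `g` is twice epi-differentiable at `X` for `Y`, then it is
twice epi-differentiable at `Diag(λ(X))` for `Diag(y)`. -/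
theorem twice_epi_diff_diag {n : ℕ} (θ : (Fin n → ℝ) → EReal)
    (X Y : Sym n) (U : Matrix (Fin n) (Fin n) ℝ) (y : Fin n → ℝ)
    (hsym : SymmetricFn θ) (hlsc : LowerSemicontinuous (specFn θ))
    (hY : LimSubgrad ipM (specFn θ) X Y)
    (hU : U ∈ eigOrth X.val)
    (hy : LimSubgrad ipV θ (eigval X.val) y)
    (hYdec : Y.val = U * Matrix.diagonal y * Uᵀ)
    (hted : TwiceEpiDiff ipM (specFn θ) X Y) :
    TwiceEpiDiff ipM (specFn θ) (diagSym (eigval X.val)) (diagSym y) := by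
  obtain ⟨hUorth, hXdec⟩ := hU
  have hU' : Uᵀ * U = 1 := mul_eq_one_comm.mp hUorth
  have hΦX : conjSym U X = diagSym (eigval X.val) := by
    apply Subtype.ext
    rw [conjSym_val]
    conv_lhs => rw [hXdec]
    show Uᵀ * (U * Matrix.diagonal (eigval X.val) * Uᵀ) * U = Matrix.diagonal (eigval X.val)
    calc Uᵀ * (U * Matrix.diagonal (eigval X.val) * Uᵀ) * U
        = (Uᵀ * U) * Matrix.diagonal (eigval X.val) * (Uᵀ * U) := by
          simp only [Matrix.mul_assoc]
      _ = Matrix.diagonal (eigval X.val) := by rw [hU']; simp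
  have hΦY : conjSym U Y = diagSym y := by
    apply Subtype.ext
    rw [conjSym_val]
    conv_lhs => rw [hYdec]
    show Uᵀ * (U * Matrix.diagonal y * Uᵀ) * U = Matrix.diagonal y
    calc Uᵀ * (U * Matrix.diagonal y * Uᵀ) * U
        = (Uᵀ * U) * Matrix.diagonal y * (Uᵀ * U) := by
          simp only [Matrix.mul_assoc]
      _ = Matrix.diagonal y := by rw [hU']; simp
  rw [← hΦX, ← hΦY]
  obtain ⟨hfin, hmain⟩ := hted
  constructor
  · rw [IsFiniteAt, specFn_conjSym θ U hUorth]
    exact hfin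
  · intro t ht htend w
    obtain ⟨ws, hws, hconv⟩ := hmain t ht htend (conjSym Uᵀ w)
    refine ⟨fun k => conjSym U (ws k), ?_, ?_⟩
    · have hc := ((continuous_conjSym U).tendsto (conjSym Uᵀ w)).comp hws
      have : conjSym U (conjSym Uᵀ w) = w := (conjHomeo U hUorth).apply_symm_apply w
      rwa [this] at hc
    · have heq : ∀ k, sdq2 ipM (specFn θ) (conjSym U X) (conjSym U Y) (t k) (conjSym U (ws k))
          = sdq2 ipM (specFn θ) X Y (t k) (ws k) := fun k => sdq2_conjSym θ U hUorth X Y _ _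
      have hsub : subderiv2 ipM (specFn θ) (conjSym U X) (conjSym U Y) w
          = subderiv2 ipM (specFn θ) X Y (conjSym Uᵀ w) := subderiv2_conjSym θ U hUorth X Y w
      rw [hsub]
      simpa only [heq] using hconv

end SpecPaper
end
end

section
/- Let θ : ℝⁿ → [−∞,+∞] be symmetric and the spectral function g = θ∘λ lower semicontinuous. Let (X,Y) ∈ gph ∂g with Y = U·Diag(y)·Uᵀ for some y ∈ ∂θ(λ(X)) and U ∈ Oⁿ(X). Then for every w ∈ ℝⁿ, d²g(Diag(λ(X)), Diag(y))(Diag(w)) ≤ d²θ(λ(X), y)(w). -/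
open Filter Topology Matrix

noncomputable section

namespace SpecPaper

/-! ## Generic variational analysis definitions over a topological real vector space -/

variable {E : Type*}

/-! ### Auxiliary lemmas for Statement 6 -/

section Aux6

open Polynomial in
private lemma aux_det_identity {n : ℕ} (v : Fin n → ℝ) (h : (Matrix.diagonal v).IsHermitian)
    (x : ℝ) : ∏ i, (x - v i) = ∏ i, (x - h.eigenvalues i) := by
  set U : Matrix (Fin n) (Fin n) ℝ := (h.eigenvectorUnitary : Matrix (Fin n) (Fin n) ℝ) with hUdef
  have hspec : Matrix.diagonal v = U * Matrix.diagonal h.eigenvalues * star U := by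
    have := h.spectral_theorem
    simpa using this
  have hUU : U * star U = 1 := (Matrix.mem_unitaryGroup_iff).mp h.eigenvectorUnitary.2
  have key : Matrix.diagonal (fun i => x - v i)
      = U * Matrix.diagonal (fun i => x - h.eigenvalues i) * star U := by
    have h1 : Matrix.diagonal (fun i => x - v i)
        = x • (1 : Matrix (Fin n) (Fin n) ℝ) - Matrix.diagonal v := by
      ext i j
      rcases eq_or_ne i j with rfl | hij
      · simp
      · simp [Matrix.diagonal_apply_ne _ hij, Matrix.one_apply_ne hij]
    have h2 : Matrix.diagonal (fun i => x - h.eigenvalues i)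
        = x • (1 : Matrix (Fin n) (Fin n) ℝ) - Matrix.diagonal h.eigenvalues := by
      ext i j
      rcases eq_or_ne i j with rfl | hij
      · simp
      · simp [Matrix.diagonal_apply_ne _ hij, Matrix.one_apply_ne hij]
    have h3 : U * (x • (1 : Matrix (Fin n) (Fin n) ℝ) - Matrix.diagonal h.eigenvalues) * star U
        = x • (1 : Matrix (Fin n) (Fin n) ℝ) - U * Matrix.diagonal h.eigenvalues * star U := by
      rw [Matrix.mul_sub, Matrix.sub_mul]
      congr 1
      rw [Matrix.mul_smul, Matrix.smul_mul, Matrix.mul_one, hUU]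
    rw [h1, h2, h3]
    exact congrArg (fun M => x • (1 : Matrix (Fin n) (Fin n) ℝ) - M) hspec
  have hdet1 : U.det * (star U).det = 1 := by
    rw [← Matrix.det_mul, hUU, Matrix.det_one]
  calc ∏ i, (x - v i) = (Matrix.diagonal fun i => x - v i).det := (Matrix.det_diagonal).symm
    _ = (U * Matrix.diagonal (fun i => x - h.eigenvalues i) * star U).det := by rw [key]
    _ = U.det * (star U).det * (Matrix.diagonal fun i => x - h.eigenvalues i).det := by
        rw [Matrix.det_mul, Matrix.det_mul]; ring
    _ = ∏ i, (x - h.eigenvalues i) := by rw [hdet1, one_mul, Matrix.det_diagonal]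

open Polynomial in
private lemma aux_eigval_mset {n : ℕ} (v : Fin n → ℝ) (h : (Matrix.diagonal v).IsHermitian) :
    Multiset.map h.eigenvalues Finset.univ.val = Multiset.map v Finset.univ.val := by
  have hpoly : ((Multiset.map h.eigenvalues Finset.univ.val).map fun a => X - C a).prod
      = ((Multiset.map v Finset.univ.val).map fun a => X - C a).prod := by
    rw [Multiset.map_map, Multiset.map_map]
    rw [← Finset.prod_eq_multiset_prod, ← Finset.prod_eq_multiset_prod]
    apply Polynomial.funext
    intro x
    simp only [eval_prod, Function.comp_apply, eval_sub, eval_X, eval_C]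
    exact (aux_det_identity v h x).symm
  have hr := congrArg Polynomial.roots hpoly
  rwa [Polynomial.roots_multiset_prod_X_sub_C, Polynomial.roots_multiset_prod_X_sub_C] at hr

private lemma aux_mset_ofFn {n : ℕ} (f : Fin n → ℝ) :
    (↑(List.ofFn f) : Multiset ℝ) = Multiset.map f Finset.univ.val := by
  rw [List.ofFn_eq_map, Fin.univ_def]
  rfl

private lemma aux_mset_comp_perm {n : ℕ} (f : Fin n → ℝ) (σ : Equiv.Perm (Fin n)) :
    Multiset.map (fun i => f (σ i)) Finset.univ.val = Multiset.map f Finset.univ.val := by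
  have h1 : Finset.univ.val.map (fun i => f (σ i))
      = (Finset.univ.val.map fun i => σ i).map f := by
    rw [Multiset.map_map]; rfl
  have h2 : (Finset.univ.val.map fun i : Fin n => σ i) = Finset.univ.val := by
    calc (Finset.univ.val.map fun i : Fin n => σ i)
        = (Finset.univ.map σ.toEmbedding).val := by rw [Finset.map_val]; rfl
      _ = Finset.univ.val := by rw [Finset.map_univ_equiv σ]
  rw [h1, h2]

private lemma aux_sorted_eq_of_mset {n : ℕ} (f g : Fin n → ℝ)
    (hm : Multiset.map f Finset.univ.val = Multiset.map g Finset.univ.val) :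
    (fun i => f (Tuple.sort (fun j => -f j) i)) = fun i => g (Tuple.sort (fun j => -g j) i) := by
  apply List.ofFn_injective
  refine (fun h1 h2 h3 => List.Perm.eq_of_pairwise' (r := fun a b : ℝ => a ≥ b) h2 h3 h1) ?_ ?_ ?_
  · rw [← Multiset.coe_eq_coe, aux_mset_ofFn, aux_mset_ofFn, aux_mset_comp_perm,
      aux_mset_comp_perm, hm]
  · rw [List.pairwise_ofFn]
    intro i j hij
    have := (Tuple.monotone_sort (fun j => -f j)) hij.le
    simpa using this
  · rw [List.pairwise_ofFn]
    intro i j hij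
    have := (Tuple.monotone_sort (fun j => -g j)) hij.le
    simpa using this

private lemma aux_specFn_diagSym {n : ℕ} (θ : (Fin n → ℝ) → EReal) (hsym : SymmetricFn θ)
    (v : Fin n → ℝ) : specFn θ (diagSym v) = θ v := by
  have h : (Matrix.diagonal v).IsHermitian := Matrix.isHermitian_diagonal v
  show θ (eigval (Matrix.diagonal v)) = θ v
  rw [eigval, dif_pos h]
  rw [aux_sorted_eq_of_mset h.eigenvalues v (aux_eigval_mset v h)]
  exact hsym v (Tuple.sort fun j => -v j)

private lemma aux_diagSym_add {n : ℕ} (t : ℝ) (a b : Fin n → ℝ) :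
    diagSym a + t • diagSym b = diagSym (a + t • b) := by
  apply Subtype.ext
  show Matrix.diagonal a + t • Matrix.diagonal b = Matrix.diagonal (a + t • b)
  rw [← Matrix.diagonal_smul]
  exact Matrix.diagonal_add a (t • b)

private lemma aux_ipM_diagSym {n : ℕ} (a b : Fin n → ℝ) :
    ipM (diagSym a) (diagSym b) = ipV a b := by
  show (Matrix.diagonal a * Matrix.diagonal b).trace = ∑ i, a i * b i
  rw [Matrix.diagonal_mul_diagonal, Matrix.trace_diagonal]

end Aux6

/-- Lemma 3.4(c): the second subderivative of `g` at `Diag(λ(X))` for `Diag(y)`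
along diagonal directions is bounded above by the second subderivative of `θ`. -/
theorem second_subderiv_diag_le {n : ℕ} (θ : (Fin n → ℝ) → EReal)
    (X Y : Sym n) (U : Matrix (Fin n) (Fin n) ℝ) (y : Fin n → ℝ)
    (hsym : SymmetricFn θ) (hlsc : LowerSemicontinuous (specFn θ))
    (hY : LimSubgrad ipM (specFn θ) X Y)
    (hU : U ∈ eigOrth X.val)
    (hy : LimSubgrad ipV θ (eigval X.val) y)
    (hYdec : Y.val = U * Matrix.diagonal y * Uᵀ) :
    ∀ w : Fin n → ℝ,
      subderiv2 ipM (specFn θ) (diagSym (eigval X.val)) (diagSym y) (diagSym w) ≤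
        subderiv2 ipV θ (eigval X.val) y w := by
  intro w
  set x : Fin n → ℝ := eigval X.val with hx
  have key : ∀ p : ℝ × (Fin n → ℝ),
      sdq2 ipM (specFn θ) (diagSym x) (diagSym y) p.1 (diagSym p.2)
        = sdq2 ipV θ x y p.1 p.2 := by
    rintro ⟨t, u⟩
    unfold sdq2
    rw [aux_diagSym_add, aux_specFn_diagSym θ hsym, aux_specFn_diagSym θ hsym,
      aux_ipM_diagSym]
  have hcont : Continuous (diagSym (n := n)) :=
    Continuous.subtype_mk (continuous_id.matrix_diagonal) _
  have hφ : Filter.Tendsto (fun p : ℝ × (Fin n → ℝ) => (p.1, diagSym p.2))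
      ((nhdsWithin (0 : ℝ) (Set.Ioi 0)) ×ˢ nhds w)
      ((nhdsWithin (0 : ℝ) (Set.Ioi 0)) ×ˢ nhds (diagSym w)) :=
    Filter.Tendsto.prodMap Filter.tendsto_id (hcont.tendsto w)
  have h1 : subderiv2 ipM (specFn θ) (diagSym x) (diagSym y) (diagSym w) ≤
      Filter.liminf (fun p : ℝ × Sym n => sdq2 ipM (specFn θ) (diagSym x) (diagSym y) p.1 p.2)
        (Filter.map (fun p : ℝ × (Fin n → ℝ) => (p.1, diagSym p.2))
          ((nhdsWithin (0 : ℝ) (Set.Ioi 0)) ×ˢ nhds w)) :=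
    Filter.liminf_le_liminf_of_le hφ
  refine h1.trans_eq ?_
  rw [show Filter.liminf (fun p : ℝ × Sym n =>
        sdq2 ipM (specFn θ) (diagSym x) (diagSym y) p.1 p.2)
      (Filter.map (fun p : ℝ × (Fin n → ℝ) => (p.1, diagSym p.2))
        ((nhdsWithin (0 : ℝ) (Set.Ioi 0)) ×ˢ nhds w))
      = Filter.liminf (fun p : ℝ × (Fin n → ℝ) =>
          sdq2 ipM (specFn θ) (diagSym x) (diagSym y) p.1 (diagSym p.2))
        ((nhdsWithin (0 : ℝ) (Set.Ioi 0)) ×ˢ nhds w) from by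
    rw [Filter.liminf, Filter.liminf, Filter.map_map]; rfl]
  unfold subderiv2
  congr 1
  funext p
  exact key p


end SpecPaper
end
end

section
/- Let φᵢ : ℝⁿ → ℝ denote the i-th order statistic, φᵢ(x) = the i-th largest entry of x, and let x ∈ ℝⁿ be such that either i = 1 or φ_{i−1}(x) > φᵢ(x); set I(x) = {j ∈ {1,…,n} : x_j = φᵢ(x)}. Then: (a) there is a neighborhood of x on which φᵢ(z) = max{z_j : j ∈ I(x)}; (b) φᵢ is locally Lipschitz continuous and subdifferentially regular at x, its subderivative satisfies dφᵢ(x)(w) = max{w_j : j ∈ I(x)} for every w ∈ ℝⁿ, and ∂φᵢ(x) = conv{e_j : j ∈ I(x)} where e_j are the standard unit vectors; (c) φᵢ is twice epi-differentiable at x for every v ∈ ∂φᵢ(x). -/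
open Filter Topology Matrix

noncomputable section

namespace SpecPaper

/-! ## Generic variational analysis definitions over a topological real vector space -/

variable {E : Type*}

/-! ### Auxiliary lemmas for Proposition 5.1 -/

section OrderStatAux

lemma orderStat_antitone {n : ℕ} (x : Fin n → ℝ) : Antitone (orderStat x) := by
  intro a b hab
  have h := Tuple.monotone_sort (fun j => -x j) hab
  simpa [orderStat, Function.comp] using h

lemma orderStat_key {n : ℕ} (i : Fin n) (z : Fin n → ℝ) (A : Finset (Fin n))
    (hcard : A.card = i.1) (hsep : ∀ j ∈ A, ∀ k ∉ A, z k < z j) :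
    IsGreatest ((fun k => z k) '' {k | k ∉ A}) (orderStat z i) := by
  set σ := Tuple.sort (fun j => -z j) with hσ
  set B : Finset (Fin n) := A.map σ.symm.toEmbedding with hB
  have hmemB : ∀ p : Fin n, p ∈ B ↔ σ p ∈ A := by
    intro p
    simp only [hB, Finset.mem_map, Equiv.coe_toEmbedding]
    constructor
    · rintro ⟨a, ha, rfl⟩; simpa using ha
    · intro h; exact ⟨σ p, h, by simp⟩
  have hcardB : B.card = i.1 := by rw [hB, Finset.card_map, hcard]
  have hanti : Antitone (fun p => z (σ p)) := orderStat_antitone z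
  have horder : ∀ p q : Fin n, p ∈ B → q ∉ B → p < q := by
    intro p q hp hq
    by_contra h
    push_neg at h
    have h1 : z (σ p) ≤ z (σ q) := hanti h
    have h2 : z (σ q) < z (σ p) := hsep _ ((hmemB p).1 hp) _ (fun hc => hq ((hmemB q).2 hc))
    exact absurd h1 (not_le.2 h2)
  have hiB : i ∉ B := by
    intro hiB
    have hsub : Bᶜ ⊆ Finset.Ioi i := fun q hq =>
      Finset.mem_Ioi.2 (horder i q hiB (Finset.mem_compl.1 hq))
    have h1 : Bᶜ.card ≤ (Finset.Ioi i).card := Finset.card_le_card hsub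
    rw [Finset.card_compl, Fintype.card_fin, Fin.card_Ioi, hcardB] at h1
    omega
  constructor
  · exact ⟨σ i, by simpa using fun hc => hiB ((hmemB i).2 hc), rfl⟩
  · rintro y ⟨k, hk, rfl⟩
    have hq : σ.symm k ∉ B := by
      intro hc
      exact hk (by simpa using (hmemB _).1 hc)
    have hle : i ≤ σ.symm k := by
      by_contra h
      push_neg at h
      have hsub : B ⊆ Finset.Iio (σ.symm k) := fun p hp =>
        Finset.mem_Iio.2 (horder p _ hp hq)
      have h1 : B.card ≤ (Finset.Iio (σ.symm k)).card := Finset.card_le_card hsub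
      rw [Fin.card_Iio, hcardB] at h1
      have : (σ.symm k : ℕ) < i.1 := h
      omega
    have := hanti hle
    simpa [orderStat] using this

lemma orderStat_cardA {n : ℕ} (i : Fin n) (x : Fin n → ℝ)
    (hlead : ∀ j : Fin n, j < i → orderStat x i < orderStat x j) :
    (Finset.univ.filter (fun j => orderStat x i < x j)).card = i.1 := by
  set σ := Tuple.sort (fun j => -x j) with hσ
  have hOS : ∀ p : Fin n, orderStat x p = x (σ p) := fun p => rfl
  have hanti := orderStat_antitone x
  have : Finset.univ.filter (fun j => orderStat x i < x j) = (Finset.Iio i).image σ := by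
    ext j
    simp only [Finset.mem_filter, Finset.mem_univ, true_and, Finset.mem_image, Finset.mem_Iio]
    constructor
    · intro hj
      refine ⟨σ.symm j, ?_, by simp⟩
      by_contra h
      push_neg at h
      have := hanti h
      rw [hOS (σ.symm j)] at this
      simp only [Equiv.apply_symm_apply] at this
      exact absurd hj (not_lt.2 this)
    · rintro ⟨p, hp, rfl⟩
      rw [← hOS p]
      exact hlead p hp
  rw [this, Finset.card_image_of_injective _ σ.injective, Fin.card_Iio]

open scoped Classical in
lemma orderStat_local_max {n : ℕ} (i : Fin n) (x : Fin n → ℝ)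
    (hlead : ∀ j : Fin n, j < i → orderStat x i < orderStat x j) :
    ∃ δ > (0:ℝ), ∀ z : Fin n → ℝ, (∀ l, |z l - x l| < δ) →
      IsGreatest ((fun j => z j) '' {j : Fin n | x j = orderStat x i}) (orderStat z i) := by
  classical
  set φ := orderStat x i with hφ
  set A : Finset (Fin n) := Finset.univ.filter (fun j => φ < x j) with hA
  have hcard : A.card = i.1 := orderStat_cardA i x hlead
  have hne : (Finset.univ : Finset (Fin n)).Nonempty := ⟨i, Finset.mem_univ i⟩
  set γ : ℝ := Finset.univ.inf' hne (fun j => if x j = φ then 1 else |x j - φ|) with hγdef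
  have hγ : 0 < γ := by
    rw [hγdef, Finset.lt_inf'_iff]
    intro j _
    by_cases hj : x j = φ
    · simp [hj]
    · simp [hj, abs_pos, sub_ne_zero.2 hj]
  have hγle : ∀ j, x j ≠ φ → γ ≤ |x j - φ| := by
    intro j hj
    have := Finset.inf'_le (fun j => if x j = φ then 1 else |x j - φ|) (Finset.mem_univ j)
    rw [if_neg hj] at this
    exact this
  refine ⟨γ/3, by linarith, ?_⟩
  intro z hz
  have hIw : x (Tuple.sort (fun j => -x j) i) = φ := rfl
  have hsep : ∀ j ∈ A, ∀ k ∉ A, z k < z j := by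
    intro j hj k hk
    rw [hA, Finset.mem_filter] at hj hk
    have hxj : φ < x j := hj.2
    have hxk : x k ≤ φ := le_of_not_gt (fun hc => hk ⟨Finset.mem_univ k, hc⟩)
    have h1 : γ ≤ x j - φ := by
      have := hγle j (ne_of_gt hxj)
      rwa [abs_of_pos (by linarith)] at this
    have h2 := hz j
    have h3 := hz k
    rw [abs_lt] at h2 h3
    linarith [h2.1, h3.2]
  have hkey := orderStat_key i z A hcard hsep
  obtain ⟨⟨k₀, hk₀, hk₀e⟩, hub⟩ := hkey
  simp only [Set.mem_setOf_eq] at hk₀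
  have hsub : {j : Fin n | x j = φ} ⊆ {k | k ∉ A} := by
    intro j hj
    simp only [Set.mem_setOf_eq] at hj ⊢
    rw [hA, Finset.mem_filter]
    rintro ⟨-, hc⟩
    exact absurd hj (ne_of_gt hc)
  have hub' : ∀ j, x j = φ → z j ≤ orderStat z i := fun j hj =>
    hub ⟨j, hsub hj, rfl⟩
  have hsep2 : ∀ j, x j = φ → ∀ k, k ∉ A → x k ≠ φ → z k < z j := by
    intro j hj k hk hkne
    have hxk : x k ≤ φ := le_of_not_gt (fun hc => hk (Finset.mem_filter.2 ⟨Finset.mem_univ k, hc⟩))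
    have h1 : γ ≤ φ - x k := by
      have := hγle k hkne
      rwa [abs_of_nonpos (by linarith), neg_sub] at this
    have h2 := hz j
    have h3 := hz k
    rw [abs_lt] at h2 h3
    rw [hj] at h2
    linarith [h2.1, h3.2]
  constructor
  · by_cases hk₀I : x k₀ = φ
    · exact ⟨k₀, hk₀I, hk₀e⟩
    · exfalso
      have h1 : z k₀ < z (Tuple.sort (fun j => -x j) i) := hsep2 _ hIw _ hk₀ hk₀I
      have h2 : z (Tuple.sort (fun j => -x j) i) ≤ orderStat z i := hub' _ hIw
      simp only at hk₀e
      rw [hk₀e] at h1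
      linarith
  · rintro y ⟨j, hj, rfl⟩
    exact hub' j hj

end OrderStatAux

section GG

variable {n : ℕ}

lemma Ifin_nonempty (i : Fin n) (x : Fin n → ℝ) :
    (Finset.univ.filter (fun j => x j = orderStat x i)).Nonempty :=
  ⟨Tuple.sort (fun j => -x j) i, Finset.mem_filter.2 ⟨Finset.mem_univ _, rfl⟩⟩

/-- `max_{j ∈ I(x)} w j`. -/
noncomputable def ggI (i : Fin n) (x : Fin n → ℝ) (w : Fin n → ℝ) : ℝ :=
  (Finset.univ.filter (fun j => x j = orderStat x i)).sup' (Ifin_nonempty i x) w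

lemma le_ggI (i : Fin n) (x : Fin n → ℝ) {j : Fin n} (hj : x j = orderStat x i)
    (w : Fin n → ℝ) : w j ≤ ggI i x w :=
  Finset.le_sup' w (Finset.mem_filter.2 ⟨Finset.mem_univ _, hj⟩)

lemma ggI_le (i : Fin n) (x : Fin n → ℝ) {w : Fin n → ℝ} {c : ℝ}
    (h : ∀ j, x j = orderStat x i → w j ≤ c) : ggI i x w ≤ c :=
  Finset.sup'_le _ _ fun j hj => h j (Finset.mem_filter.1 hj).2

lemma ggI_exists (i : Fin n) (x : Fin n → ℝ) (w : Fin n → ℝ) :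
    ∃ j, x j = orderStat x i ∧ ggI i x w = w j := by
  obtain ⟨j, hj, hje⟩ := Finset.exists_mem_eq_sup' (Ifin_nonempty i x) w
  exact ⟨j, (Finset.mem_filter.1 hj).2, hje⟩

lemma ggI_smul (i : Fin n) (x : Fin n → ℝ) {t : ℝ} (ht : 0 ≤ t) (w : Fin n → ℝ) :
    ggI i x (t • w) = t * ggI i x w := by
  apply le_antisymm
  · obtain ⟨j, hj, hje⟩ := ggI_exists i x (t • w)
    rw [hje]
    exact mul_le_mul_of_nonneg_left (le_ggI i x hj w) ht
  · obtain ⟨j, hj, hje⟩ := ggI_exists i x w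
    rw [hje]
    exact le_ggI i x hj (t • w)

lemma ggI_lip (i : Fin n) (x : Fin n → ℝ) (a b : Fin n → ℝ) :
    |ggI i x a - ggI i x b| ≤ dist a b := by
  rw [abs_sub_le_iff]
  constructor
  · obtain ⟨j, hj, hje⟩ := ggI_exists i x a
    rw [hje]
    have h1 : a j - b j ≤ dist a b := by
      have := dist_le_pi_dist a b j
      rw [Real.dist_eq, abs_le] at *
      linarith [this.2]
    linarith [le_ggI i x hj b]
  · obtain ⟨j, hj, hje⟩ := ggI_exists i x b
    rw [hje]
    have h1 : b j - a j ≤ dist a b := by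
      have := dist_le_pi_dist a b j
      rw [Real.dist_eq, abs_le] at this
      linarith [this.1]
    linarith [le_ggI i x hj a]

lemma ggI_cont (i : Fin n) (x : Fin n → ℝ) : Continuous (ggI i x) := by
  apply Metric.continuous_iff.2
  intro a ε hε
  exact ⟨ε, hε, fun b hb => by
    rw [Real.dist_eq]
    calc |ggI i x b - ggI i x a| ≤ dist b a := ggI_lip i x b a
    _ < ε := hb⟩

lemma ggI_convex (i : Fin n) (x : Fin n → ℝ) (a d : Fin n → ℝ) {t : ℝ} (h0 : 0 ≤ t)
    (h1 : t ≤ 1) : ggI i x (a + t • d) ≤ (1 - t) * ggI i x a + t * ggI i x (a + d) := by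
  apply ggI_le
  intro j hj
  have ha := le_ggI i x hj a
  have had := le_ggI i x hj (a + d)
  have e : (a + t • d) j = (1 - t) * a j + t * (a + d) j := by
    simp [Pi.add_apply, Pi.smul_apply, smul_eq_mul]; ring
  rw [e]
  have := mul_le_mul_of_nonneg_left ha (by linarith : (0:ℝ) ≤ 1 - t)
  have := mul_le_mul_of_nonneg_left had h0
  linarith

lemma orderStat_formula (i : Fin n) (x : Fin n → ℝ) {z : Fin n → ℝ}
    (h : IsGreatest ((fun j => z j) '' {j : Fin n | x j = orderStat x i}) (orderStat z i)) :
    orderStat z i = orderStat x i + ggI i x (z - x) := by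
  obtain ⟨⟨k, hk, hke⟩, hub⟩ := h
  simp only [Set.mem_setOf_eq] at hk
  apply le_antisymm
  · simp only at hke
    rw [← hke]
    have := le_ggI i x hk (z - x)
    simp only [Pi.sub_apply] at this
    linarith [this, hk.ge, hk.le]
  · obtain ⟨j, hj, hje⟩ := ggI_exists i x (z - x)
    rw [hje]
    have := hub ⟨j, hj, rfl⟩
    simp only [Pi.sub_apply] at *
    linarith [this, hj.le]

/-! Inner-product helper lemmas -/

lemma abs_le_nrm (y : Fin n → ℝ) (l : Fin n) : |y l| ≤ nrm ipV y := by
  rw [nrm, ← Real.sqrt_sq_eq_abs]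
  apply Real.sqrt_le_sqrt
  rw [ipV]
  have : (y l)^2 = y l * y l := sq (y l) ▸ by ring
  rw [this]
  exact Finset.single_le_sum (f := fun j => y j * y j) (fun j _ => mul_self_nonneg _)
    (Finset.mem_univ l)

lemma nrm_nonneg (ip : (Fin n → ℝ) → (Fin n → ℝ) → ℝ) (y : Fin n → ℝ) : 0 ≤ nrm ip y :=
  Real.sqrt_nonneg _

lemma nrm_smul (t : ℝ) (w : Fin n → ℝ) : nrm ipV (t • w) = |t| * nrm ipV w := by
  rw [nrm, nrm, ipV, ipV]
  have : ∑ j, (t • w) j * (t • w) j = t^2 * ∑ j, w j * w j := by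
    rw [Finset.mul_sum]
    congr 1
    ext j
    simp [smul_eq_mul]; ring
  rw [this, Real.sqrt_mul (sq_nonneg t), Real.sqrt_sq_eq_abs]

lemma nrm_pos {y : Fin n → ℝ} (h : y ≠ 0) : 0 < nrm ipV y := by
  obtain ⟨l, hl⟩ : ∃ l, y l ≠ 0 := by
    by_contra hc
    push_neg at hc
    exact h (funext hc)
  have h1 : 0 < |y l| := abs_pos.2 hl
  linarith [abs_le_nrm y l]

lemma ipV_smul_right (v : Fin n → ℝ) (t : ℝ) (w : Fin n → ℝ) :
    ipV v (t • w) = t * ipV v w := by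
  rw [ipV, ipV, Finset.mul_sum]
  congr 1
  ext j
  simp [smul_eq_mul]; ring

lemma ipV_single (j : Fin n) (w : Fin n → ℝ) : ipV (Pi.single j (1:ℝ)) w = w j := by
  rw [ipV]
  rw [Finset.sum_eq_single j]
  · simp
  · intro k _ hk
    simp [Pi.single_apply, hk]
  · intro h
    exact absurd (Finset.mem_univ j) h

lemma ipV_zero_right (v : Fin n → ℝ) : ipV v 0 = 0 := by simp [ipV]

end GG

section SubgradAux

variable {n : ℕ}

lemma ggI_congr (i : Fin n) (x : Fin n → ℝ) {w₁ w₂ : Fin n → ℝ}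
    (h : ∀ k, x k = orderStat x i → w₁ k = w₂ k) : ggI i x w₁ = ggI i x w₂ := by
  apply le_antisymm
  · apply ggI_le
    intro j hj
    rw [h j hj]
    exact le_ggI i x hj w₂
  · apply ggI_le
    intro j hj
    rw [← h j hj]
    exact le_ggI i x hj w₁

lemma ggI_add_const (i : Fin n) (x : Fin n → ℝ) (w : Fin n → ℝ) (c : ℝ) :
    ggI i x (fun k => w k + c) = ggI i x w + c := by
  apply le_antisymm
  · apply ggI_le
    intro j hj
    have := le_ggI i x hj w
    linarith
  · obtain ⟨j, hj, hje⟩ := ggI_exists i x w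
    have := le_ggI i x hj (fun k => w k + c)
    linarith

lemma ipV_lin_left (a b : ℝ) (v₁ v₂ w : Fin n → ℝ) :
    ipV (a • v₁ + b • v₂) w = a * ipV v₁ w + b * ipV v₂ w := by
  simp only [ipV, Pi.add_apply, Pi.smul_apply, smul_eq_mul, Finset.mul_sum]
  rw [← Finset.sum_add_distrib]
  congr 1
  ext j
  ring

lemma ipV_le_ggI (i : Fin n) (x : Fin n → ℝ) {v : Fin n → ℝ}
    (hv : v ∈ convexHull ℝ
      {e : Fin n → ℝ | ∃ j : Fin n, x j = orderStat x i ∧ e = Pi.single j 1})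
    (w : Fin n → ℝ) : ipV v w ≤ ggI i x w := by
  have hconv : Convex ℝ {v : Fin n → ℝ | ipV v w ≤ ggI i x w} := by
    intro v₁ h₁ v₂ h₂ a b ha hb hab
    simp only [Set.mem_setOf_eq] at *
    rw [ipV_lin_left]
    calc a * ipV v₁ w + b * ipV v₂ w ≤ a * ggI i x w + b * ggI i x w := by
          gcongr
    _ = ggI i x w := by rw [← add_mul, hab, one_mul]
  have hbase : {e : Fin n → ℝ | ∃ j : Fin n, x j = orderStat x i ∧ e = Pi.single j 1} ⊆
      {v : Fin n → ℝ | ipV v w ≤ ggI i x w} := by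
    rintro e ⟨j, hj, rfl⟩
    simp only [Set.mem_setOf_eq, ipV_single]
    exact le_ggI i x hj w
  exact convexHull_min hbase hconv hv

lemma K_finite (i : Fin n) (x : Fin n → ℝ) :
    Set.Finite {e : Fin n → ℝ | ∃ j : Fin n, x j = orderStat x i ∧ e = Pi.single j 1} := by
  have : {e : Fin n → ℝ | ∃ j : Fin n, x j = orderStat x i ∧ e = Pi.single j 1} ⊆
      (fun j : Fin n => (Pi.single j 1 : Fin n → ℝ)) '' Set.univ := by
    rintro e ⟨j, _, rfl⟩
    exact ⟨j, Set.mem_univ j, rfl⟩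
  exact Set.Finite.subset ((Set.finite_univ).image _) this

lemma K_closed (i : Fin n) (x : Fin n → ℝ) :
    IsClosed (convexHull ℝ
      {e : Fin n → ℝ | ∃ j : Fin n, x j = orderStat x i ∧ e = Pi.single j 1}) :=
  ((K_finite i x).isCompact_convexHull ℝ).isClosed

lemma regSubgrad_of_mem_K (i : Fin n) (x : Fin n → ℝ) {δ : ℝ} (hδ : 0 < δ)
    (hform : ∀ z : Fin n → ℝ, (∀ l, |z l - x l| < δ) →
      orderStat z i = orderStat x i + ggI i x (z - x))
    {v : Fin n → ℝ}
    (hv : v ∈ convexHull ℝ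
      {e : Fin n → ℝ | ∃ j : Fin n, x j = orderStat x i ∧ e = Pi.single j 1}) :
    RegSubgrad ipV (fun z => ((orderStat z i : ℝ) : EReal)) x v := by
  refine ⟨⟨EReal.coe_ne_top _, EReal.coe_ne_bot _⟩, ?_⟩
  have hball : Metric.ball x δ ∈ nhdsWithin x {x}ᶜ :=
    nhdsWithin_le_nhds (Metric.ball_mem_nhds x hδ)
  apply Filter.le_liminf_of_le (by isBoundedDefault)
  · filter_upwards [hball] with y hy
    have hyc : ∀ l, |y l - x l| < δ := by
      intro l
      have := (dist_pi_lt_iff hδ).1 hy l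
      rwa [Real.dist_eq] at this
    rw [hform y hyc]
    have e1 : ((((orderStat x i + ggI i x (y - x) : ℝ)) : EReal) - ((orderStat x i : ℝ) : EReal)
        - ((ipV v (y - x) : ℝ) : EReal)) =
        (((ggI i x (y - x) - ipV v (y - x) : ℝ)) : EReal) := by
      rw [← EReal.coe_sub, ← EReal.coe_sub]
      norm_num
    rw [e1, ← EReal.coe_mul]
    apply EReal.coe_nonneg.2
    apply mul_nonneg (inv_nonneg.2 (nrm_nonneg _ _))
    have := ipV_le_ggI i x hv (y - x)
    linarith

lemma mem_K_of_regSubgrad (i : Fin n) (x : Fin n → ℝ) {δ : ℝ} (hδ : 0 < δ)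
    (hform : ∀ z : Fin n → ℝ, (∀ l, |z l - x l| < δ) →
      orderStat z i = orderStat x i + ggI i x (z - x))
    {y u : Fin n → ℝ} (hy : ∀ l, |y l - x l| < δ)
    (hreg : RegSubgrad ipV (fun z => ((orderStat z i : ℝ) : EReal)) y u) :
    u ∈ convexHull ℝ
      {e : Fin n → ℝ | ∃ j : Fin n, x j = orderStat x i ∧ e = Pi.single j 1} := by
  classical
  set φ := orderStat x i with hφ
  set a : Fin n → ℝ := y - x with ha
  -- Step (i): directional inequality
  have hsub : ∀ d : Fin n → ℝ, ipV u d ≤ ggI i x (a + d) - ggI i x a := by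
    intro d
    by_cases hd : d = 0
    · subst hd
      simp [ipV_zero_right]
    · set ν : ℝ := nrm ipV d with hν
      have hνpos : 0 < ν := nrm_pos hd
      have hmain := hreg.2
      set G : (Fin n → ℝ) → EReal := fun y' =>
        (((nrm ipV (y' - y))⁻¹ : ℝ) : EReal) *
          (((orderStat y' i : ℝ) : EReal) - ((orderStat y i : ℝ) : EReal)
            - ((ipV u (y' - y) : ℝ) : EReal)) with hG
      set m : ℝ → (Fin n → ℝ) := fun t => y + t • d with hm
      have hmap : Filter.Tendsto m (nhdsWithin 0 (Set.Ioi 0)) (nhdsWithin y {y}ᶜ) := by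
        rw [tendsto_nhdsWithin_iff]
        constructor
        · have h1 : Filter.Tendsto m (nhds 0) (nhds y) := by
            have : Filter.Tendsto (fun t : ℝ => t • d) (nhds 0) (nhds ((0:ℝ) • d)) :=
              (tendsto_id.smul_const d)
            rw [zero_smul] at this
            simpa [hm] using (tendsto_const_nhds.add this)
          exact h1.mono_left nhdsWithin_le_nhds
        · filter_upwards [self_mem_nhdsWithin] with t ht
          simp only [Set.mem_Ioi] at ht
          simp only [hm, Set.mem_compl_iff, Set.mem_singleton_iff]
          intro hc
          have : t • d = 0 := by
            have := congrArg (fun z => z - y) hc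
            simpa using this
          exact (smul_ne_zero (ne_of_gt ht) hd) this
      have h1 : (0 : EReal) ≤ Filter.liminf (G ∘ m) (nhdsWithin 0 (Set.Ioi 0)) := by
        refine le_trans hmain ?_
        rw [Filter.liminf_comp]
        exact Filter.liminf_le_liminf_of_le hmap
      set c : ℝ := ν⁻¹ * (ggI i x (a + d) - ggI i x a - ipV u d) with hc
      have h2 : Filter.liminf (G ∘ m) (nhdsWithin 0 (Set.Ioi 0)) ≤ ((c : ℝ) : EReal) := by
        apply Filter.liminf_le_of_frequently_le'
        apply Filter.Eventually.frequently
        -- choose ε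
        have hyball : y ∈ Metric.ball x δ := by
          rw [Metric.mem_ball, dist_pi_lt_iff hδ]
          intro l
          rw [Real.dist_eq]
          exact hy l
        obtain ⟨r, hr, hrsub⟩ := Metric.exists_ball_subset_ball hyball
        set ε : ℝ := min 1 (r / (‖d‖ + 1)) with hε
        have hdpos : (0:ℝ) < ‖d‖ + 1 := by positivity
        have hεpos : 0 < ε := lt_min one_pos (div_pos hr hdpos)
        have hIoo : Set.Ioo (0:ℝ) ε ∈ nhdsWithin (0:ℝ) (Set.Ioi 0) :=
          Ioo_mem_nhdsGT_of_mem ⟨le_refl 0, hεpos⟩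
        filter_upwards [hIoo] with t ht
        obtain ⟨ht0, htε⟩ := ht
        have ht1 : t ≤ 1 := le_of_lt (lt_of_lt_of_le htε (min_le_left _ _))
        have hmt : m t ∈ Metric.ball x δ := by
          apply hrsub
          rw [Metric.mem_ball, hm]
          have : (y + t • d) - y = t • d := by abel
          rw [dist_eq_norm, this, norm_smul]
          have h3 : ‖d‖ < ‖d‖ + 1 := by linarith
          have h4 : t < r / (‖d‖ + 1) := lt_of_lt_of_le htε (min_le_right _ _)
          rw [Real.norm_eq_abs, abs_of_pos ht0]
          calc t * ‖d‖ ≤ t * (‖d‖ + 1) := by nlinarith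
          _ < r := by
            rw [← lt_div_iff₀ hdpos] at *
            exact h4
        have hmtc : ∀ l, |m t l - x l| < δ := by
          intro l
          have := (dist_pi_lt_iff hδ).1 hmt l
          rwa [Real.dist_eq] at this
        have hyc : ∀ l, |y l - x l| < δ := hy
        -- compute G (m t)
        have e0 : m t - y = t • d := by simp only [hm]; abel
        have e1 : m t - x = a + t • d := by simp only [hm, ha]; abel
        have eOS1 : orderStat (m t) i = orderStat x i + ggI i x (a + t • d) := by
          rw [hform (m t) hmtc, e1]
        have eOS2 : orderStat y i = orderStat x i + ggI i x a := by
          rw [hform y hyc, ← ha]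
        have envm : nrm ipV (m t - y) = t * ν := by
          rw [e0, nrm_smul, abs_of_pos ht0, hν]
        have hGval : (G ∘ m) t =
            ((((t * ν)⁻¹ * (ggI i x (a + t • d) - ggI i x a - t * ipV u d) : ℝ)) : EReal) := by
          simp only [Function.comp_apply, hG]
          rw [envm, eOS1, eOS2, e0, ipV_smul_right]
          rw [← EReal.coe_sub, ← EReal.coe_sub, ← EReal.coe_mul]
          norm_num
        rw [hGval]
        apply EReal.coe_le_coe_iff.2
        have hcvx := ggI_convex i x a d (le_of_lt ht0) ht1
        set Q : ℝ := ggI i x (a + d) - ggI i x a - ipV u d with hQ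
        have hq : ggI i x (a + t • d) - ggI i x a - t * ipV u d ≤ t * Q := by
          rw [hQ]; nlinarith [hcvx]
        have hinv : (0:ℝ) ≤ (t * ν)⁻¹ := inv_nonneg.2 (by positivity)
        calc (t * ν)⁻¹ * (ggI i x (a + t • d) - ggI i x a - t * ipV u d)
            ≤ (t * ν)⁻¹ * (t * Q) := by nlinarith [hq, hinv]
        _ = ν⁻¹ * Q := by
            rw [mul_inv, mul_comm t⁻¹ ν⁻¹, mul_assoc, ← mul_assoc t⁻¹ t Q,
              inv_mul_cancel₀ (ne_of_gt ht0), one_mul]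
        _ = c := by rw [hc]
      have h3 : (0 : EReal) ≤ ((c : ℝ) : EReal) := le_trans h1 h2
      have h4 : (0:ℝ) ≤ c := EReal.coe_nonneg.1 h3
      have hQnn : (0:ℝ) ≤ ggI i x (a + d) - ggI i x a - ipV u d := by
        have hνinv : (0:ℝ) < ν⁻¹ := inv_pos.2 hνpos
        nlinarith [h4]
      linarith
  -- Step (ii): coordinate information
  have ipV_single_right : ∀ (w : Fin n → ℝ) (j : Fin n), ipV w (Pi.single j 1) = w j := by
    intro w j
    rw [ipV, Finset.sum_eq_single j]
    · simp
    · intro k _ hk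
      simp [Pi.single_eq_of_ne hk]
    · intro h
      exact absurd (Finset.mem_univ j) h
  have hoff : ∀ j : Fin n, x j ≠ φ → u j = 0 := by
    intro j hj
    have e1 : ggI i x (a + Pi.single j 1) = ggI i x a := by
      apply ggI_congr
      intro k hk
      have hkj : k ≠ j := fun hc => hj (hc ▸ hk)
      simp [Pi.single_eq_of_ne hkj]
    have e2 : ggI i x (a + (-1 : ℝ) • (Pi.single j 1 : Fin n → ℝ)) = ggI i x a := by
      apply ggI_congr
      intro k hk
      have hkj : k ≠ j := fun hc => hj (hc ▸ hk)
      simp [Pi.single_eq_of_ne hkj]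
    have h1 := hsub (Pi.single j 1 : Fin n → ℝ)
    have h2 := hsub ((-1 : ℝ) • (Pi.single j 1 : Fin n → ℝ))
    rw [e1, ipV_single_right] at h1
    rw [e2, ipV_smul_right, ipV_single_right] at h2
    have h1' : u j ≤ 0 := by linarith
    have h2' : -u j ≤ 0 := by linarith
    linarith
  have hnn : ∀ j : Fin n, 0 ≤ u j := by
    intro j
    by_cases hj : x j = φ
    · have h2 := hsub ((-1 : ℝ) • (Pi.single j 1 : Fin n → ℝ))
      rw [ipV_smul_right, ipV_single_right] at h2
      have e3 : ggI i x (a + (-1:ℝ) • (Pi.single j 1 : Fin n → ℝ)) ≤ ggI i x a := by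
        apply ggI_le
        intro k hk
        have h4 := le_ggI i x hk a
        simp only [Pi.add_apply, Pi.smul_apply, smul_eq_mul]
        by_cases hkj : k = j
        · subst hkj
          simp only [Pi.single_eq_same]
          linarith
        · rw [Pi.single_eq_of_ne hkj]
          simpa using h4
      linarith
    · rw [hoff j hj]
  have hsum : ∑ j, u j = 1 := by
    have hip1 : ipV u (fun _ => (1:ℝ)) = ∑ j, u j := by simp [ipV]
    have hipm1 : ipV u (fun _ => (-1:ℝ)) = -∑ j, u j := by
      simp [ipV, ← Finset.sum_neg_distrib]
    have hgg1 : ggI i x (a + fun _ => (1:ℝ)) = ggI i x a + 1 := by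
      have e : (a + fun _ => (1:ℝ)) = fun k => a k + 1 := rfl
      rw [e, ggI_add_const]
    have hggm1 : ggI i x (a + fun _ => (-1:ℝ)) = ggI i x a + (-1) := by
      have e : (a + fun _ => (-1:ℝ)) = fun k => a k + (-1) := rfl
      rw [e, ggI_add_const]
    have h1 := hsub (fun _ => (1:ℝ))
    have h2 := hsub (fun _ => (-1:ℝ))
    rw [hip1, hgg1] at h1
    rw [hipm1, hggm1] at h2
    linarith
  have hsumI : ∑ j ∈ Finset.univ.filter (fun j => x j = φ), u j = 1 := by
    have hz : ∑ j ∈ Finset.univ.filter (fun j => ¬ x j = φ), u j = 0 :=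
      Finset.sum_eq_zero (fun j hj => hoff j (Finset.mem_filter.1 hj).2)
    have htot := Finset.sum_filter_add_sum_filter_not Finset.univ (fun j => x j = φ) u
    rw [hz, add_zero] at htot
    rw [htot, hsum]
  have hmem := Finset.centerMass_mem_convexHull (s :=
      {e : Fin n → ℝ | ∃ j : Fin n, x j = orderStat x i ∧ e = Pi.single j 1})
      (Finset.univ.filter (fun j => x j = φ))
      (fun j _ => hnn j) (by rw [hsumI]; exact one_pos)
      (fun j hj => ⟨j, (Finset.mem_filter.1 hj).2, rfl⟩)
  have hcm : (Finset.univ.filter (fun j => x j = φ)).centerMass u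
      (fun j => (Pi.single j 1 : Fin n → ℝ)) = u := by
    rw [Finset.centerMass, hsumI]
    simp only [inv_one, one_smul]
    funext k
    rw [Finset.sum_apply]
    simp only [Pi.smul_apply, Pi.single_apply, smul_eq_mul, mul_ite, mul_one, mul_zero]
    rw [Finset.sum_ite_eq]
    by_cases hk : x k = φ
    · simp [hk]
    · simp [hk, hoff k hk]
  rw [hcm] at hmem
  exact hmem

end SubgradAux

section SubderivAux

variable {n : ℕ}

lemma ev_small (i : Fin n) (x : Fin n → ℝ) {δ : ℝ} (hδ : 0 < δ) (w : Fin n → ℝ) :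
    ∀ᶠ p : ℝ × (Fin n → ℝ) in (nhdsWithin (0:ℝ) (Set.Ioi 0)) ×ˢ nhds w,
      0 < p.1 ∧ ∀ l, |(x + p.1 • p.2) l - x l| < δ := by
  set C : ℝ := ‖w‖ + 1 with hC
  have hCpos : 0 < C := by positivity
  have h1 : Set.Ioo (0:ℝ) (δ / C) ∈ nhdsWithin (0:ℝ) (Set.Ioi 0) :=
    Ioo_mem_nhdsGT_of_mem ⟨le_refl 0, div_pos hδ hCpos⟩
  have h2 : Metric.ball w 1 ∈ nhds w := Metric.ball_mem_nhds w one_pos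
  filter_upwards [Filter.prod_mem_prod h1 h2] with p hp
  obtain ⟨⟨ht0, htδ⟩, hw'⟩ := hp
  refine ⟨ht0, fun l => ?_⟩
  have e1 : (x + p.1 • p.2) l - x l = p.1 * p.2 l := by simp
  rw [e1, abs_mul, abs_of_pos ht0]
  have h3 : |p.2 l| ≤ ‖p.2‖ := norm_le_pi_norm p.2 l
  have h4 : ‖p.2‖ < C := by
    have := mem_ball_iff_norm.1 hw'
    calc ‖p.2‖ = ‖w + (p.2 - w)‖ := by rw [add_sub_cancel]
    _ ≤ ‖w‖ + ‖p.2 - w‖ := norm_add_le _ _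
    _ < ‖w‖ + 1 := by linarith
  calc p.1 * |p.2 l| ≤ p.1 * C := by nlinarith
  _ < δ := by
    rw [← lt_div_iff₀ hCpos] at *
    exact htδ

lemma subderiv_eq (i : Fin n) (x : Fin n → ℝ) {δ : ℝ} (hδ : 0 < δ)
    (hform : ∀ z : Fin n → ℝ, (∀ l, |z l - x l| < δ) →
      orderStat z i = orderStat x i + ggI i x (z - x))
    (w : Fin n → ℝ) :
    subderiv (fun z => ((orderStat z i : ℝ) : EReal)) x w = ((ggI i x w : ℝ) : EReal) := by
  rw [subderiv]
  have hev : ∀ᶠ p : ℝ × (Fin n → ℝ) in (nhdsWithin (0:ℝ) (Set.Ioi 0)) ×ˢ nhds w,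
      (((p.1)⁻¹ : ℝ) : EReal) *
        (((orderStat (x + p.1 • p.2) i : ℝ) : EReal) - ((orderStat x i : ℝ) : EReal)) =
      ((ggI i x p.2 : ℝ) : EReal) := by
    filter_upwards [ev_small i x hδ w] with p hp
    obtain ⟨ht, hsmall⟩ := hp
    rw [hform _ hsmall]
    have e1 : (x + p.1 • p.2) - x = p.1 • p.2 := by abel
    rw [e1, ggI_smul i x (le_of_lt ht)]
    rw [← EReal.coe_sub, ← EReal.coe_mul]
    congr 1
    field_simp
    ring
  rw [Filter.liminf_congr hev]
  apply Filter.Tendsto.liminf_eq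
  exact (continuous_coe_real_ereal.tendsto _).comp
    (((ggI_cont i x).tendsto w).comp tendsto_snd)

end SubderivAux

section NormalConeAux

variable {n : ℕ}

/-- The local convex model for the epigraph. -/
def CC (i : Fin n) (x : Fin n → ℝ) : Set ((Fin n → ℝ) × ℝ) :=
  {p | ∀ j, x j = orderStat x i → p.1 j ≤ p.2}

lemma ipProd_smul_right (v u : (Fin n → ℝ) × ℝ) (t : ℝ) :
    ipProd ipV v (t • u) = t * ipProd ipV v u := by
  show ipV v.1 (t • u.1) + v.2 * (t * u.2) = t * (ipV v.1 u.1 + v.2 * u.2)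
  rw [ipV_smul_right]
  ring

lemma ipProd_cont2 :
    Continuous (fun q : ((Fin n → ℝ) × ℝ) × ((Fin n → ℝ) × ℝ) => ipProd ipV q.1 q.2) := by
  unfold ipProd ipV
  apply Continuous.add
  · apply continuous_finset_sum
    intro j _
    exact ((continuous_apply j).comp (continuous_fst.comp continuous_fst)).mul
      ((continuous_apply j).comp (continuous_fst.comp continuous_snd))
  · exact (continuous_snd.comp continuous_fst).mul (continuous_snd.comp continuous_snd)

lemma ipProd_cont_right (v : (Fin n → ℝ) × ℝ) :
    Continuous (fun u : (Fin n → ℝ) × ℝ => ipProd ipV v u) :=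
  ipProd_cont2.comp (Continuous.prodMk continuous_const continuous_id)

lemma tangentCone_mono_of_loc {S S' O : Set ((Fin n → ℝ) × ℝ)} (hO : IsOpen O)
    {q : (Fin n → ℝ) × ℝ} (hq : q ∈ O) (h : ∀ p ∈ O, p ∈ S ↔ p ∈ S') :
    tangentCone S q ⊆ tangentCone S' q := by
  rintro w ⟨t, ws, hpos, ht, hws, hmem⟩
  have htend : Filter.Tendsto (fun k => q + t k • ws k) atTop (nhds q) := by
    have h1 : Filter.Tendsto (fun k => t k • ws k) atTop (nhds ((0:ℝ) • w)) :=
      ht.smul hws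
    rw [zero_smul] at h1
    simpa using (tendsto_const_nhds.add h1)
  have hO' : ∀ᶠ k in atTop, q + t k • ws k ∈ O := htend.eventually_mem (hO.mem_nhds hq)
  obtain ⟨N, hN⟩ := Filter.eventually_atTop.1 hO'
  refine ⟨fun k => t (k + N), fun k => ws (k + N), fun k => hpos _,
    ht.comp (tendsto_add_atTop_nat N), hws.comp (tendsto_add_atTop_nat N), fun k => ?_⟩
  exact (h _ (hN _ (Nat.le_add_left N k))).1 (hmem _)

lemma regNormalCone_CC (i : Fin n) (x : Fin n → ℝ) {q : (Fin n → ℝ) × ℝ} (hq : q ∈ CC i x) :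
    regNormalCone (ipProd ipV) (CC i x) q =
      {v | ∀ p ∈ CC i x, ipProd ipV v (p - q) ≤ 0} := by
  ext v
  constructor
  · intro hv p hp
    apply hv
    refine ⟨fun k => 1 / (k + 1 : ℝ), fun _ => p - q, fun k => by positivity,
      tendsto_one_div_add_atTop_nhds_zero_nat, tendsto_const_nhds, fun k => ?_⟩
    set t : ℝ := 1 / (k + 1 : ℝ) with hts
    have ht0 : 0 < t := by positivity
    have ht1 : t ≤ 1 := by
      rw [hts, div_le_one (by positivity)]
      have : (0:ℝ) ≤ (k:ℝ) := Nat.cast_nonneg k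
      linarith
    intro j hj
    have h1 : q.1 j ≤ q.2 := hq j hj
    have h2 : p.1 j ≤ p.2 := hp j hj
    have e : (q + t • (p - q)).1 j = q.1 j + t * (p.1 j - q.1 j) := by
      simp [smul_eq_mul]
    have e2 : (q + t • (p - q)).2 = q.2 + t * (p.2 - q.2) := by
      simp [smul_eq_mul]
    rw [e, e2]
    nlinarith
  · rintro hv w ⟨t, ws, hpos, ht, hws, hmem⟩
    have hk : ∀ k, ipProd ipV v (ws k) ≤ 0 := by
      intro k
      have h1 : ipProd ipV v (t k • ws k) ≤ 0 := by
        have e : t k • ws k = (q + t k • ws k) - q := by abel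
        rw [e]
        exact hv _ (hmem k)
      rw [ipProd_smul_right] at h1
      nlinarith [hpos k, h1]
    have htendip : Filter.Tendsto (fun k => ipProd ipV v (ws k)) atTop
        (nhds (ipProd ipV v w)) :=
      ((ipProd_cont_right v).tendsto w).comp hws
    exact le_of_tendsto htendip (Filter.Eventually.of_forall hk)

lemma epi_loc (i : Fin n) (x : Fin n → ℝ) {δ : ℝ} (hδ : 0 < δ)
    (hloc : ∀ z : Fin n → ℝ, (∀ l, |z l - x l| < δ) →
      IsGreatest ((fun j => z j) '' {j : Fin n | x j = orderStat x i}) (orderStat z i))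
    (p : (Fin n → ℝ) × ℝ) (hp : ∀ l, |p.1 l - x l| < δ) :
    p ∈ epiSet (fun z => ((orderStat z i : ℝ) : EReal)) ↔ p ∈ CC i x := by
  have h := hloc p.1 hp
  constructor
  · intro hmem j hj
    have h1 : ((orderStat p.1 i : ℝ) : EReal) ≤ (p.2 : EReal) := hmem
    rw [EReal.coe_le_coe_iff] at h1
    exact le_trans (h.2 ⟨j, hj, rfl⟩) h1
  · intro hmem
    obtain ⟨⟨j, hj, hje⟩, _⟩ := h
    show ((orderStat p.1 i : ℝ) : EReal) ≤ (p.2 : EReal)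
    rw [EReal.coe_le_coe_iff]
    simp only at hje
    rw [← hje]
    exact hmem j hj

end NormalConeAux

section SecondOrderAux

variable {n : ℕ}

lemma ipV_cont_right (v : Fin n → ℝ) : Continuous (fun w => ipV v w) := by
  unfold ipV
  apply continuous_finset_sum
  intro j _
  exact continuous_const.mul (continuous_apply j)

lemma sdq2_eq (i : Fin n) (x : Fin n → ℝ) {δ : ℝ}
    (hform : ∀ z : Fin n → ℝ, (∀ l, |z l - x l| < δ) →
      orderStat z i = orderStat x i + ggI i x (z - x))
    (v : Fin n → ℝ) {t : ℝ} (ht : 0 < t) {w' : Fin n → ℝ}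
    (hsmall : ∀ l, |(x + t • w') l - x l| < δ) :
    sdq2 ipV (fun z => ((orderStat z i : ℝ) : EReal)) x v t w' =
      (((2 / t) * (ggI i x w' - ipV v w') : ℝ) : EReal) := by
  rw [sdq2, hform _ hsmall]
  have e1 : (x + t • w') - x = t • w' := by abel
  rw [e1, ggI_smul i x (le_of_lt ht)]
  rw [← EReal.coe_sub, ← EReal.coe_sub, ← EReal.coe_mul]
  congr 1
  field_simp
  ring

lemma subderiv2_eq (i : Fin n) (x : Fin n → ℝ) {δ : ℝ} (hδ : 0 < δ)
    (hform : ∀ z : Fin n → ℝ, (∀ l, |z l - x l| < δ) →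
      orderStat z i = orderStat x i + ggI i x (z - x))
    (v : Fin n → ℝ) (hip : ∀ w, ipV v w ≤ ggI i x w) (w : Fin n → ℝ) :
    subderiv2 ipV (fun z => ((orderStat z i : ℝ) : EReal)) x v w =
      if ggI i x w - ipV v w = 0 then (0 : EReal) else ⊤ := by
  have hcont : Continuous (fun w' => ggI i x w' - ipV v w') :=
    (ggI_cont i x).sub (ipV_cont_right v)
  have hev : ∀ᶠ p : ℝ × (Fin n → ℝ) in (nhdsWithin (0:ℝ) (Set.Ioi 0)) ×ˢ nhds w,
      sdq2 ipV (fun z => ((orderStat z i : ℝ) : EReal)) x v p.1 p.2 =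
        (((2 / p.1) * (ggI i x p.2 - ipV v p.2) : ℝ) : EReal) ∧ 0 < p.1 := by
    filter_upwards [ev_small i x hδ w] with p hp
    exact ⟨sdq2_eq i x hform v hp.1 hp.2, hp.1⟩
  by_cases hw : ggI i x w - ipV v w = 0
  · rw [if_pos hw, subderiv2]
    apply le_antisymm
    · have hpath : Filter.Tendsto (fun t : ℝ => (t, w)) (nhdsWithin (0:ℝ) (Set.Ioi 0))
          ((nhdsWithin (0:ℝ) (Set.Ioi 0)) ×ˢ nhds w) :=
        Filter.Tendsto.prodMk tendsto_id tendsto_const_nhds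
      have h1 : Filter.liminf
          (fun p : ℝ × (Fin n → ℝ) =>
            sdq2 ipV (fun z => ((orderStat z i : ℝ) : EReal)) x v p.1 p.2)
          ((nhdsWithin (0:ℝ) (Set.Ioi 0)) ×ˢ nhds w) ≤
          Filter.liminf
          (fun t : ℝ => sdq2 ipV (fun z => ((orderStat z i : ℝ) : EReal)) x v t w)
          (nhdsWithin (0:ℝ) (Set.Ioi 0)) := by
        have h2 := Filter.liminf_le_liminf_of_le (u :=
          fun p : ℝ × (Fin n → ℝ) =>
            sdq2 ipV (fun z => ((orderStat z i : ℝ) : EReal)) x v p.1 p.2) hpath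
        rw [← Filter.liminf_comp] at h2
        exact h2
      refine le_trans h1 ?_
      have hev2 : ∀ᶠ t : ℝ in nhdsWithin (0:ℝ) (Set.Ioi 0),
          sdq2 ipV (fun z => ((orderStat z i : ℝ) : EReal)) x v t w = (0 : EReal) := by
        filter_upwards [hpath.eventually hev] with t ht
        rw [ht.1, hw]
        norm_num
      rw [Filter.liminf_congr hev2, Filter.liminf_const]
    · apply Filter.le_liminf_of_le (by isBoundedDefault)
      filter_upwards [hev] with p hp
      rw [hp.1]
      apply EReal.coe_nonneg.2
      have h3 : 0 ≤ ggI i x p.2 - ipV v p.2 := by linarith [hip p.2]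
      exact mul_nonneg (div_nonneg (by norm_num) (le_of_lt hp.2)) h3
  · rw [if_neg hw]
    have hcpos : 0 < ggI i x w - ipV v w := lt_of_le_of_ne (by linarith [hip w]) (Ne.symm hw)
    set c₀ : ℝ := ggI i x w - ipV v w with hc₀
    rw [subderiv2]
    have htend : Filter.Tendsto
        (fun p : ℝ × (Fin n → ℝ) =>
          sdq2 ipV (fun z => ((orderStat z i : ℝ) : EReal)) x v p.1 p.2)
        ((nhdsWithin (0:ℝ) (Set.Ioi 0)) ×ˢ nhds w) (nhds ⊤) := by
      rw [EReal.tendsto_nhds_top_iff_real]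
      intro M
      have hball : {w' : Fin n → ℝ | c₀ / 2 < ggI i x w' - ipV v w'} ∈ nhds w := by
        apply hcont.tendsto w |>.eventually_mem
        exact Ioi_mem_nhds (by rw [← hc₀]; linarith)
      have hIoo : Set.Ioo (0:ℝ) (c₀ / (|M| + 1)) ∈ nhdsWithin (0:ℝ) (Set.Ioi 0) :=
        Ioo_mem_nhdsGT_of_mem ⟨le_refl 0, by positivity⟩
      filter_upwards [hev, Filter.prod_mem_prod hIoo hball] with p hp hp2
      obtain ⟨⟨ht0, htc⟩, hwball⟩ := hp2
      rw [hp.1]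
      apply EReal.coe_lt_coe_iff.2
      simp only [Set.mem_setOf_eq] at hwball
      have h6 : |M| + 1 < c₀ / p.1 := by
        rw [lt_div_iff₀ ht0]
        have h7 := (lt_div_iff₀ (by positivity : (0:ℝ) < |M| + 1)).1 htc
        nlinarith
      have e8 : (2 / p.1) * (c₀ / 2) = c₀ / p.1 := by field_simp
      calc M ≤ |M| := le_abs_self M
      _ < c₀ / p.1 := by linarith
      _ = (2 / p.1) * (c₀ / 2) := e8.symm
      _ ≤ (2 / p.1) * (ggI i x p.2 - ipV v p.2) := by
        apply mul_le_mul_of_nonneg_left (le_of_lt hwball) (by positivity)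
    exact htend.liminf_eq

end SecondOrderAux

lemma twiceEpiDiff_orderStat {n : ℕ} (i : Fin n) (x : Fin n → ℝ) {δ : ℝ} (hδ : 0 < δ)
    (hform : ∀ z : Fin n → ℝ, (∀ l, |z l - x l| < δ) →
      orderStat z i = orderStat x i + ggI i x (z - x))
    (v : Fin n → ℝ) (hip : ∀ w, ipV v w ≤ ggI i x w) :
    TwiceEpiDiff ipV (fun z => ((orderStat z i : ℝ) : EReal)) x v := by
  refine ⟨⟨EReal.coe_ne_top _, EReal.coe_ne_bot _⟩, ?_⟩
  intro t htpos htlim w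
  refine ⟨fun _ => w, tendsto_const_nhds, ?_⟩
  rw [subderiv2_eq i x hδ hform v hip w]
  have hCpos : (0:ℝ) < ‖w‖ + 1 := by positivity
  have hevsm : ∀ᶠ k in atTop, ∀ l, |(x + t k • w) l - x l| < δ := by
    have hball : Metric.ball (0:ℝ) (δ / (‖w‖ + 1)) ∈ nhds (0:ℝ) :=
      Metric.ball_mem_nhds _ (by positivity)
    filter_upwards [htlim.eventually_mem hball] with k hk l
    rw [Metric.mem_ball, Real.dist_eq, sub_zero] at hk
    have e1 : (x + t k • w) l - x l = t k * w l := by simp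
    rw [e1, abs_mul]
    have h2 : |w l| ≤ ‖w‖ := norm_le_pi_norm w l
    have h3 : |t k| < δ / (‖w‖ + 1) := hk
    have h4 : (0:ℝ) ≤ |t k| := abs_nonneg _
    calc |t k| * |w l| ≤ |t k| * (‖w‖ + 1) := by nlinarith
    _ < δ := by
      rw [← lt_div_iff₀ hCpos]
      exact h3
  by_cases hw : ggI i x w - ipV v w = 0
  · rw [if_pos hw]
    have heq : ∀ᶠ k in atTop,
        sdq2 ipV (fun z => ((orderStat z i : ℝ) : EReal)) x v (t k) w = (0 : EReal) := by
      filter_upwards [hevsm] with k hk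
      rw [sdq2_eq i x hform v (htpos k) hk, hw]
      norm_num
    exact tendsto_const_nhds.congr' (by filter_upwards [heq] with k h using h.symm)
  · rw [if_neg hw]
    have hcpos : 0 < ggI i x w - ipV v w := lt_of_le_of_ne (by linarith [hip w]) (Ne.symm hw)
    set c₀ : ℝ := ggI i x w - ipV v w with hc₀
    rw [EReal.tendsto_nhds_top_iff_real]
    intro M
    have hball : Metric.ball (0:ℝ) (c₀ / (|M| + 1)) ∈ nhds (0:ℝ) :=
      Metric.ball_mem_nhds _ (by positivity)
    filter_upwards [hevsm, htlim.eventually_mem hball] with k hk hk2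
    rw [sdq2_eq i x hform v (htpos k) hk]
    apply EReal.coe_lt_coe_iff.2
    rw [Metric.mem_ball, Real.dist_eq, sub_zero, abs_of_pos (htpos k)] at hk2
    have h6 : |M| + 1 < c₀ / t k := by
      rw [lt_div_iff₀ (htpos k)]
      have h7 := (lt_div_iff₀ (by positivity : (0:ℝ) < |M| + 1)).1 hk2
      nlinarith
    have e8 : (2 / t k) * (c₀ / 2) = c₀ / t k := by field_simp
    calc M ≤ |M| := le_abs_self M
    _ < c₀ / t k := by linarith
    _ = (2 / t k) * (c₀ / 2) := e8.symm
    _ ≤ (2 / t k) * c₀ := by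
      have : (0:ℝ) ≤ 2 / t k := div_nonneg (by norm_num) (le_of_lt (htpos k))
      nlinarith
    _ = (2 / t k) * (ggI i x w - ipV v w) := by rw [hc₀]

lemma subdiffRegular_orderStat {n : ℕ} (i : Fin n) (x : Fin n → ℝ) {δ : ℝ} (hδ : 0 < δ)
    (hloc : ∀ z : Fin n → ℝ, (∀ l, |z l - x l| < δ) →
      IsGreatest ((fun j => z j) '' {j : Fin n | x j = orderStat x i}) (orderStat z i)) :
    SubdiffRegularAt ipV (fun z => ((orderStat z i : ℝ) : EReal)) x := by
  set f : (Fin n → ℝ) → EReal := fun z => ((orderStat z i : ℝ) : EReal) with hf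
  refine ⟨⟨EReal.coe_ne_top _, EReal.coe_ne_bot _⟩, ?_⟩
  have htR : (f x).toReal = orderStat x i := EReal.toReal_coe _
  rw [htR]
  set p₀ : (Fin n → ℝ) × ℝ := (x, orderStat x i) with hp₀
  set W : Set ((Fin n → ℝ) × ℝ) := {p | ∀ l, |p.1 l - x l| < δ} with hW
  have hWopen : IsOpen W := by
    have : W = Prod.fst ⁻¹' (Metric.ball x δ) := by
      ext p
      simp only [hW, Set.mem_setOf_eq, Set.mem_preimage, Metric.mem_ball, dist_pi_lt_iff hδ,
        Real.dist_eq]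
    rw [this]
    exact Metric.isOpen_ball.preimage continuous_fst
  have hp₀W : p₀ ∈ W := by
    intro l
    simp [hp₀]
    exact hδ
  have hiff : ∀ p ∈ W, p ∈ epiSet f ↔ p ∈ CC i x := fun p hp => epi_loc i x hδ hloc p hp
  have htan : ∀ q ∈ W, tangentCone (epiSet f) q = tangentCone (CC i x) q := fun q hq =>
    Set.Subset.antisymm (tangentCone_mono_of_loc hWopen hq hiff)
      (tangentCone_mono_of_loc hWopen hq (fun p hp => (hiff p hp).symm))
  have hreg : ∀ q ∈ W, regNormalCone (ipProd ipV) (epiSet f) q =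
      regNormalCone (ipProd ipV) (CC i x) q := by
    intro q hq
    unfold regNormalCone
    rw [htan q hq]
  have hp₀C : p₀ ∈ CC i x := fun j hj => le_of_eq hj
  have hp₀epi : p₀ ∈ epiSet f := (hiff p₀ hp₀W).2 hp₀C
  apply Set.Subset.antisymm
  · intro v hv
    exact ⟨fun _ => p₀, fun _ => v, fun _ => hp₀epi, fun _ => hv, tendsto_const_nhds,
      tendsto_const_nhds⟩
  · rintro v ⟨xs, vs, hxsmem, hvsmem, hxs, hvs⟩
    rw [hreg p₀ hp₀W, regNormalCone_CC i x hp₀C]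
    intro p hp
    have hevW : ∀ᶠ k in atTop, xs k ∈ W := hxs.eventually_mem (hWopen.mem_nhds hp₀W)
    have hk : ∀ᶠ k in atTop, ipProd ipV (vs k) (p - xs k) ≤ 0 := by
      filter_upwards [hevW] with k hkW
      have hxsC : xs k ∈ CC i x := (hiff _ hkW).1 (hxsmem k)
      have h1 := hvsmem k
      rw [hreg _ hkW, regNormalCone_CC i x hxsC] at h1
      exact h1 p hp
    have hus : Filter.Tendsto (fun k => p - xs k) atTop (nhds (p - p₀)) :=
      Filter.Tendsto.sub tendsto_const_nhds hxs
    have htendip : Filter.Tendsto (fun k => ipProd ipV (vs k) (p - xs k)) atTop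
        (nhds (ipProd ipV v (p - p₀))) := by
      unfold ipProd
      apply Filter.Tendsto.add
      · unfold ipV
        apply tendsto_finset_sum
        intro j _
        apply Filter.Tendsto.mul
        · exact (((continuous_apply j).comp continuous_fst).tendsto _).comp hvs
        · exact (((continuous_apply j).comp continuous_fst).tendsto _).comp hus
      · apply Filter.Tendsto.mul
        · exact (continuous_snd.tendsto _).comp hvs
        · exact (continuous_snd.tendsto _).comp hus
    exact le_of_tendsto htendip hk







/-- Proposition 5.1: properties of the `i`-th order statistic at a point where
it is a "leading" value. -/
theorem order_statistic_props {n : ℕ} (i : Fin n) (x : Fin n → ℝ)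
    (hlead : ∀ j : Fin n, j < i → orderStat x i < orderStat x j) :
    -- (a) local representation as a max over the active index set
    (∃ V ∈ nhds x, ∀ z ∈ V,
      IsGreatest ((fun j => z j) '' {j : Fin n | x j = orderStat x i}) (orderStat z i)) ∧
    -- (b) local Lipschitz continuity
    (∃ V ∈ nhds x, ∃ ℓ : ℝ, 0 ≤ ℓ ∧ ∀ a ∈ V, ∀ b ∈ V,
      |orderStat a i - orderStat b i| ≤ ℓ * nrm ipV (a - b)) ∧
    -- (b) subdifferential regularity
    SubdiffRegularAt ipV (fun z => ((orderStat z i : ℝ) : EReal)) x ∧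
    -- (b) subderivative formula
    (∀ w : Fin n → ℝ, ∃ d : ℝ,
      subderiv (fun z => ((orderStat z i : ℝ) : EReal)) x w = (d : EReal) ∧
      IsGreatest ((fun j => w j) '' {j : Fin n | x j = orderStat x i}) d) ∧
    -- (b) subdifferential formula
    (∀ v : Fin n → ℝ,
      LimSubgrad ipV (fun z => ((orderStat z i : ℝ) : EReal)) x v ↔
        v ∈ convexHull ℝ
          {e : Fin n → ℝ | ∃ j : Fin n, x j = orderStat x i ∧ e = Pi.single j 1}) ∧
    -- (c) twice epi-differentiability
    (∀ v : Fin n → ℝ, LimSubgrad ipV (fun z => ((orderStat z i : ℝ) : EReal)) x v →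
      TwiceEpiDiff ipV (fun z => ((orderStat z i : ℝ) : EReal)) x v) := by
  classical
  obtain ⟨δ, hδ, hloc⟩ := orderStat_local_max i x hlead
  have hform : ∀ z : Fin n → ℝ, (∀ l, |z l - x l| < δ) →
      orderStat z i = orderStat x i + ggI i x (z - x) :=
    fun z hz => orderStat_formula i x (hloc z hz)
  set V : Set (Fin n → ℝ) := Metric.ball x δ with hV
  have hVn : V ∈ nhds x := Metric.ball_mem_nhds x hδ
  have hVc : ∀ z ∈ V, ∀ l, |z l - x l| < δ := by
    intro z hz l
    have := (dist_pi_lt_iff hδ).1 hz l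
    rwa [Real.dist_eq] at this
  have hsubdiff : ∀ v : Fin n → ℝ,
      LimSubgrad ipV (fun z => ((orderStat z i : ℝ) : EReal)) x v ↔
        v ∈ convexHull ℝ
          {e : Fin n → ℝ | ∃ j : Fin n, x j = orderStat x i ∧ e = Pi.single j 1} := by
    intro v
    constructor
    · rintro ⟨xs, vs, hregs, hxs, hvs, -⟩
      have hevb : ∀ᶠ k in atTop, ∀ l, |xs k l - x l| < δ := by
        filter_upwards [hxs.eventually_mem hVn] with k hk
        exact hVc _ hk
      have hevK : ∀ᶠ k in atTop, vs k ∈ convexHull ℝ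
          {e : Fin n → ℝ | ∃ j : Fin n, x j = orderStat x i ∧ e = Pi.single j 1} := by
        filter_upwards [hevb] with k hk
        exact mem_K_of_regSubgrad i x hδ hform hk (hregs k)
      exact (K_closed i x).mem_of_tendsto hvs hevK
    · intro hv
      exact ⟨fun _ => x, fun _ => v, fun _ => regSubgrad_of_mem_K i x hδ hform hv,
        tendsto_const_nhds, tendsto_const_nhds, tendsto_const_nhds⟩
  refine ⟨⟨V, hVn, fun z hz => hloc z (hVc z hz)⟩, ?_, ?_, ?_, hsubdiff, ?_⟩
  · -- local Lipschitz continuity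
    refine ⟨V, hVn, 1, zero_le_one, fun a ha b hb => ?_⟩
    rw [hform a (hVc a ha), hform b (hVc b hb), one_mul]
    have e1 : orderStat x i + ggI i x (a - x) - (orderStat x i + ggI i x (b - x)) =
        ggI i x (a - x) - ggI i x (b - x) := by ring
    rw [e1]
    calc |ggI i x (a - x) - ggI i x (b - x)| ≤ dist (a - x) (b - x) := ggI_lip i x _ _
    _ = dist a b := dist_sub_right a b x
    _ ≤ nrm ipV (a - b) := by
      rw [dist_eq_norm]
      apply pi_norm_le_iff_of_nonneg (nrm_nonneg _ _) |>.2
      intro l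
      rw [Real.norm_eq_abs]
      exact abs_le_nrm (a - b) l
  · -- subdifferential regularity
    exact subdiffRegular_orderStat i x hδ hloc
  · -- subderivative formula
    intro w
    refine ⟨ggI i x w, subderiv_eq i x hδ hform w, ?_, ?_⟩
    · obtain ⟨j, hj, hje⟩ := ggI_exists i x w
      exact ⟨j, hj, hje.symm⟩
    · rintro y ⟨j, hj, rfl⟩
      exact le_ggI i x hj w
  · -- twice epi-differentiability
    intro v hv
    have hvK := (hsubdiff v).1 hv
    exact twiceEpiDiff_orderStat i x hδ hform v (ipV_le_ggI i x hvK)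

end SpecPaper
end
end
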